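/- arXiv:2503.07745 — 11 statements merged into one kernel-verified Lean document; each statement's English description precedes it below -/
import Mathlib

section
/- Let G be a nonzero Hermitian d×d complex matrix with trace zero, and let |G| denote the positive semidefinite square root of G². Then tr|G| > 0, and there exist positive semidefinite d×d matrices ρ₀ and ρ₁, each of trace one, satisfying ρ₀ρ₁ = 0, such that G = (1/2)·tr|G|·(ρ₀ − ρ₁). -/
/-!
By functional calculus, the positive and negative parts `G⁺`, `G⁻` are positive semidefinite with
`G⁺ G⁻ = 0`, `G⁺ - G⁻ = G` and `G⁺ + G⁻ = |G|`. Since `tr G = 0`, both `tr G⁺` and `tr G⁻` equal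
`tr|G| / 2`, which is positive because `|G|² = G²` rules out `|G| = 0`; so `ρ₀ = 2 G⁺ / tr|G|`
and `ρ₁ = 2 G⁻ / tr|G|` work.
-/

open ComplexOrder

noncomputable def Matrix.PosSemidef.sqrt {n : Type*} [Fintype n] [DecidableEq n] {𝕜 : Type*}
    [RCLike 𝕜] {A : Matrix n n 𝕜} (hA : A.PosSemidef) : Matrix n n 𝕜 :=
  hA.1.eigenvectorUnitary.1 * Matrix.diagonal ((↑) ∘ (√·) ∘ hA.1.eigenvalues) *
  (star hA.1.eigenvectorUnitary : Matrix n n 𝕜)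

open scoped MatrixOrder

namespace Matrix

variable {n 𝕜 : Type*} [Fintype n] [DecidableEq n] [RCLike 𝕜]

lemma PosSemidef.sqrt_eq_cfcSqrt {A : Matrix n n 𝕜} (hA : A.PosSemidef) :
    hA.sqrt = CFC.sqrt A := by
  rw [CFC.sqrt_eq_cfc, cfc_nnreal_eq_real _ A, hA.1.cfc_eq]
  simp only [PosSemidef.sqrt, IsHermitian.cfc]
  congr 3
  funext i
  simp [Real.coe_toNNReal', hA.eigenvalues_nonneg i]

lemma IsHermitian.sqrt_sq_eq_cfcAbs {G : Matrix n n 𝕜} (hG : G.IsHermitian)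
    (hsq : (G ^ 2).PosSemidef) : hsq.sqrt = CFC.abs G := by
  rw [hsq.sqrt_eq_cfcSqrt, CFC.abs, sq, star_eq_conjTranspose, hG.eq]

lemma trace_cfcAbs_pos {G : Matrix n n 𝕜} (hne : G ≠ 0) : 0 < (CFC.abs G).trace := by
  have habs : (CFC.abs G).PosSemidef := nonneg_iff_posSemidef.mp (CFC.abs_nonneg G)
  refine habs.trace_nonneg.lt_of_ne' fun h ↦ hne ?_
  have : Gᴴ * G = 0 := by
    rw [← star_eq_conjTranspose, ← CFC.abs_mul_abs, habs.trace_eq_zero_iff.mp h, zero_mul]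
  exact conjTranspose_mul_self_eq_zero.mp this

lemma IsHermitian.trace_posPart_eq_of_trace_eq_zero {G : Matrix n n 𝕜} (hG : G.IsHermitian)
    (htr : G.trace = 0) : G⁺.trace = (CFC.abs G).trace / 2 := by
  have := congrArg trace (CFC.abs_add_self G hG.isSelfAdjoint)
  rw [trace_add, htr, add_zero, trace_smul] at this
  rw [this, two_nsmul, add_self_div_two]

lemma IsHermitian.trace_negPart_eq_of_trace_eq_zero {G : Matrix n n 𝕜} (hG : G.IsHermitian)
    (htr : G.trace = 0) : G⁻.trace = (CFC.abs G).trace / 2 := by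
  have := congrArg trace (CFC.abs_sub_self G hG.isSelfAdjoint)
  rw [trace_sub, htr, sub_zero, trace_smul] at this
  rw [this, two_nsmul, add_self_div_two]

end Matrix

/-- Let `G` be a nonzero Hermitian `d×d` complex matrix with trace zero, and
let `|G|` denote the positive semidefinite square root of `G²` (here `hsq.sqrt`, where `hsq`
witnesses that `G²` is positive semidefinite — which is automatic for Hermitian `G`).
Then `tr|G| > 0` (in the complex order, i.e. real and positive), and there exist positive
semidefinite matrices `ρ₀, ρ₁`, each of trace one, with `ρ₀ρ₁ = 0`, such that
`G = (1/2)·tr|G|·(ρ₀ − ρ₁)`. -/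
theorem stmt0 (d : ℕ) (G : Matrix (Fin d) (Fin d) ℂ) (hG : G.IsHermitian)
    (hne : G ≠ 0) (htr : G.trace = 0) (hsq : (G ^ 2).PosSemidef) :
    0 < hsq.sqrt.trace ∧
    ∃ ρ₀ ρ₁ : Matrix (Fin d) (Fin d) ℂ,
      ρ₀.PosSemidef ∧ ρ₁.PosSemidef ∧ ρ₀.trace = 1 ∧ ρ₁.trace = 1 ∧ ρ₀ * ρ₁ = 0 ∧
      G = ((1 : ℂ) / 2 * hsq.sqrt.trace) • (ρ₀ - ρ₁) := by
  rw [hG.sqrt_sq_eq_cfcAbs]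
  have htr₀ := hG.trace_posPart_eq_of_trace_eq_zero htr
  have htr₁ := hG.trace_negPart_eq_of_trace_eq_zero htr
  set t := (CFC.abs G).trace
  have ht : 0 < t := Matrix.trace_cfcAbs_pos hne
  have hc : 0 ≤ 2 / t := (div_pos two_pos ht).le
  refine ⟨ht, (2 / t) • G⁺, (2 / t) • G⁻,
    (Matrix.nonneg_iff_posSemidef.mp (CFC.posPart_nonneg G)).smul hc,
    (Matrix.nonneg_iff_posSemidef.mp (CFC.negPart_nonneg G)).smul hc, ?_, ?_, ?_, ?_⟩
  · rw [Matrix.trace_smul, htr₀, smul_eq_mul]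
    field_simp
  · rw [Matrix.trace_smul, htr₁, smul_eq_mul]
    field_simp
  · rw [smul_mul_smul_comm, CFC.posPart_mul_negPart, smul_zero]
  · have hscalar : 1 / 2 * t * (2 / t) = 1 := by field_simp
    rw [← smul_sub, CFC.posPart_sub_negPart G hG.isSelfAdjoint, smul_smul, hscalar, one_smul]
end

section
/- Let d ≥ 1 and let a, b : Fin d → ℝ be nonnegative with Σᵢ aᵢ = Σᵢ bᵢ = 1 and aᵢbᵢ = 0 for all i. Set ρ₀ = Σᵢ aᵢ Eᵢᵢ and ρ₁ = Σᵢ bᵢ Eᵢᵢ (diagonal d×d matrices), and define the purified codewords C₀ = Σᵢ √aᵢ (eᵢ ⊗ eᵢ) and C₁ = Σᵢ √bᵢ (eᵢ ⊗ eᵢ) in ℂ^d ⊗ ℂ^d. Then C₀ and C₁ are orthonormal, and for every d×d complex matrix B one has ⟨C₀, (B ⊗ I_d) C₁⟩ = 0 = ⟨C₁, (B ⊗ I_d) C₀⟩ and ⟨C₀, (B ⊗ I_d) C₀⟩ − ⟨C₁, (B ⊗ I_d) C₁⟩ = tr((ρ₀ − ρ₁)B). -/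
open scoped BigOperators

/-- The standard (conjugate-linear in the first slot) inner product on `ℂ^{d} ⊗ ℂ^{d}`,
realized as functions `Fin d × Fin d → ℂ`. -/
noncomputable def innPA {d : ℕ} (x y : Fin d × Fin d → ℂ) : ℂ :=
  ∑ p : Fin d × Fin d, (starRingEnd ℂ) (x p) * y p

/-- The action of `B ⊗ I_d` on a vector of `ℂ^{d} ⊗ ℂ^{d}`. -/
noncomputable def applyBI {d : ℕ} (B : Matrix (Fin d) (Fin d) ℂ) (v : Fin d × Fin d → ℂ) :
    Fin d × Fin d → ℂ :=
  fun p => ∑ j : Fin d, B p.1 j * v (j, p.2)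

/-- The purified codeword `Σᵢ √cᵢ (eᵢ ⊗ eᵢ)` associated with nonnegative weights `c`. -/
noncomputable def codeword {d : ℕ} (c : Fin d → ℝ) : Fin d × Fin d → ℂ :=
  fun p => if p.1 = p.2 then (Real.sqrt (c p.1) : ℂ) else 0

lemma inn_codeword {d : ℕ} (c c' : Fin d → ℝ) :
    innPA (codeword c) (codeword c')
      = ∑ i, ((Real.sqrt (c i) : ℂ) * (Real.sqrt (c' i) : ℂ)) := by
  unfold innPA codeword
  rw [Fintype.sum_prod_type]
  simp [apply_ite, Complex.conj_ofReal]

lemma inn_applyBI {d : ℕ} (c c' : Fin d → ℝ) (B : Matrix (Fin d) (Fin d) ℂ) :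
    innPA (codeword c) (applyBI B (codeword c'))
      = ∑ i, (Real.sqrt (c i) : ℂ) * B i i * (Real.sqrt (c' i) : ℂ) := by
  unfold innPA applyBI codeword
  rw [Fintype.sum_prod_type]
  simp only [mul_ite, mul_zero, Finset.sum_ite_eq', Finset.mem_univ, if_true, apply_ite,
    map_zero, Complex.conj_ofReal, ite_mul, zero_mul]
  refine Finset.sum_congr rfl fun i _ => ?_
  rw [Finset.sum_ite_eq]
  simp [mul_assoc]

lemma sqrt_mul_sqrt_zero {x y : ℝ} (hx : 0 ≤ x) (h : x * y = 0) :
    Real.sqrt x * Real.sqrt y = 0 := by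
  rw [← Real.sqrt_mul hx, h, Real.sqrt_zero]

/-- For nonnegative `a, b` summing to `1` with disjoint supports, the purified
codewords `C₀ = Σᵢ √aᵢ (eᵢ ⊗ eᵢ)` and `C₁ = Σᵢ √bᵢ (eᵢ ⊗ eᵢ)` are orthonormal, satisfy
`⟨C₀,(B⊗I)C₁⟩ = 0 = ⟨C₁,(B⊗I)C₀⟩` for every `d×d` matrix `B`, and
`⟨C₀,(B⊗I)C₀⟩ − ⟨C₁,(B⊗I)C₁⟩ = tr((ρ₀ − ρ₁)B)` where `ρ₀ = Σᵢ aᵢEᵢᵢ`, `ρ₁ = Σᵢ bᵢEᵢᵢ`. -/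
theorem stmt1 (d : ℕ) (hd : 1 ≤ d) (a b : Fin d → ℝ)
    (ha : ∀ i, 0 ≤ a i) (hb : ∀ i, 0 ≤ b i)
    (hsa : ∑ i, a i = 1) (hsb : ∑ i, b i = 1) (hab : ∀ i, a i * b i = 0) :
    (innPA (codeword a) (codeword a) = 1 ∧
     innPA (codeword b) (codeword b) = 1 ∧
     innPA (codeword a) (codeword b) = 0) ∧
    (∀ B : Matrix (Fin d) (Fin d) ℂ,
      innPA (codeword a) (applyBI B (codeword b)) = 0 ∧
      innPA (codeword b) (applyBI B (codeword a)) = 0 ∧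
      innPA (codeword a) (applyBI B (codeword a))
        - innPA (codeword b) (applyBI B (codeword b))
        = ((Matrix.diagonal (fun i => (a i : ℂ)) - Matrix.diagonal (fun i => (b i : ℂ))) * B).trace) := by
  have hab' : ∀ i : Fin d, (Real.sqrt (a i) : ℂ) * (Real.sqrt (b i) : ℂ) = 0 := by
    intro i
    rw [← Complex.ofReal_mul, sqrt_mul_sqrt_zero (ha i) (hab i), Complex.ofReal_zero]
  have hba' : ∀ i : Fin d, (Real.sqrt (b i) : ℂ) * (Real.sqrt (a i) : ℂ) = 0 := by
    intro i; rw [mul_comm]; exact hab' i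
  have hsq : ∀ (c : Fin d → ℝ), (∀ i, 0 ≤ c i) →
      ∀ i, (Real.sqrt (c i) : ℂ) * (Real.sqrt (c i) : ℂ) = (c i : ℂ) := by
    intro c hc i
    rw [← Complex.ofReal_mul, Real.mul_self_sqrt (hc i)]
  constructor
  · refine ⟨?_, ?_, ?_⟩
    · rw [inn_codeword]
      simp only [hsq a ha]
      rw [← Complex.ofReal_sum, hsa, Complex.ofReal_one]
    · rw [inn_codeword]
      simp only [hsq b hb]
      rw [← Complex.ofReal_sum, hsb, Complex.ofReal_one]
    · rw [inn_codeword]; simp [hab']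
  · intro B
    have htr : ((Matrix.diagonal (fun i => (a i : ℂ)) - Matrix.diagonal (fun i => (b i : ℂ))) * B).trace
        = ∑ i, ((a i : ℂ) - (b i : ℂ)) * B i i := by
      simp [Matrix.trace, Matrix.diag, Matrix.mul_apply, Matrix.diagonal_apply, ite_mul,
        Finset.sum_ite_eq, sub_mul]
    refine ⟨?_, ?_, ?_⟩
    · rw [inn_applyBI]
      refine Finset.sum_eq_zero fun i _ => ?_
      rw [mul_assoc, mul_comm (B i i), ← mul_assoc, hab' i, zero_mul]
    · rw [inn_applyBI]
      refine Finset.sum_eq_zero fun i _ => ?_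
      rw [mul_assoc, mul_comm (B i i), ← mul_assoc, hba' i, zero_mul]
    · rw [inn_applyBI, inn_applyBI, htr, ← Finset.sum_sub_distrib]
      refine Finset.sum_congr rfl fun i _ => ?_
      rw [mul_assoc, mul_comm (B i i), ← mul_assoc, hsq a ha i,
          mul_assoc, mul_comm (B i i), ← mul_assoc, hsq b hb i, sub_mul]
end

section
/- Let d ≥ 1, let a, b : Fin d → ℝ be nonnegative with Σᵢ aᵢ = Σᵢ bᵢ = 1 and aᵢbᵢ = 0 for all i, set ρ₀ = Σᵢ aᵢ Eᵢᵢ, ρ₁ = Σᵢ bᵢ Eᵢᵢ, C₀ = Σᵢ √aᵢ (eᵢ ⊗ eᵢ), C₁ = Σᵢ √bᵢ (eᵢ ⊗ eᵢ) ∈ ℂ^d ⊗ ℂ^d. Let τ > 0, put G⊥ := (τ/2)(ρ₀ − ρ₁), and let G be a Hermitian d×d matrix with tr(G⊥(G − G⊥)) = 0. Then ⟨C₀, (G ⊗ I_d) C₀⟩ − ⟨C₁, (G ⊗ I_d) C₁⟩ = 2·tr(G⊥²)/τ > 0. In particular, with the code-space projector P = C₀C₀† + C₁C₁†, the matrix P(G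 ⊗ I_d)P is not a scalar multiple of P. -/
open scoped BigOperators
open ComplexOrder

/-- The rank-one projector `CC†` onto a vector `C` of `ℂ^{d} ⊗ ℂ^{d}`. -/
noncomputable def rankOne {d : ℕ} (C : Fin d × Fin d → ℂ) :
    Matrix (Fin d × Fin d) (Fin d × Fin d) ℂ :=
  Matrix.of fun p q => C p * (starRingEnd ℂ) (C q)

/-- The matrix of `B ⊗ I_d` on `ℂ^{d} ⊗ ℂ^{d}`. -/
noncomputable def matBI {d : ℕ} (B : Matrix (Fin d) (Fin d) ℂ) :
    Matrix (Fin d × Fin d) (Fin d × Fin d) ℂ :=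
  Matrix.of fun p q => B p.1 q.1 * (if p.2 = q.2 then 1 else 0)

/-- Quadratic form of `G ⊗ I` on a codeword. -/
lemma quad_codeword {d : ℕ} (c : Fin d → ℝ) (hc : ∀ i, 0 ≤ c i)
    (G : Matrix (Fin d) (Fin d) ℂ) :
    innPA (codeword c) (applyBI G (codeword c)) = ∑ i, (c i : ℂ) * G i i := by
  unfold innPA applyBI codeword
  simp only [Fintype.sum_prod_type, mul_ite, mul_zero, Finset.sum_ite_eq', Finset.mem_univ,
    if_true, ite_mul, zero_mul, Finset.sum_ite_eq, apply_ite (starRingEnd ℂ), map_zero,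
    Complex.conj_ofReal]
  congr 1; ext i
  rw [show (Real.sqrt (c i) : ℂ) * (G i i * Real.sqrt (c i))
      = (Real.sqrt (c i) * Real.sqrt (c i) : ℝ) * G i i by push_cast; ring,
    Real.mul_self_sqrt (hc i)]

/-- Entry of `P (G ⊗ I) P` at a diagonal-pair index. -/
lemma entry_PGP {d : ℕ} (a b : Fin d → ℝ) (ha : ∀ i, 0 ≤ a i) (hb : ∀ i, 0 ≤ b i)
    (hab : ∀ i, a i * b i = 0) (G : Matrix (Fin d) (Fin d) ℂ) (i : Fin d) :
    ((rankOne (codeword a) + rankOne (codeword b)) * matBI G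
      * (rankOne (codeword a) + rankOne (codeword b))) ((i,i)) ((i,i))
    = (a i : ℂ) * ∑ m, (a m : ℂ) * G m m + (b i : ℂ) * ∑ m, (b m : ℂ) * G m m := by
  have hsab : ∀ j, Real.sqrt (a j) * Real.sqrt (b j) = 0 := fun j => by
    rw [← Real.sqrt_mul (ha j), hab j, Real.sqrt_zero]
  have hite : ∀ (c : Prop) [Decidable c] (A B : ℂ),
      ((if c then A else 0) + if c then B else 0) = if c then A + B else 0 := by
    intros c _ A B; split <;> simp
  simp only [Matrix.mul_apply, Matrix.add_apply, rankOne, matBI, codeword, Matrix.of_apply,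
    Fintype.sum_prod_type, apply_ite (starRingEnd ℂ), map_zero, Complex.conj_ofReal,
    ite_mul, zero_mul, mul_ite, mul_zero, mul_one]
  simp only [Finset.sum_ite_eq', Finset.sum_ite_eq, Finset.mem_univ, if_true,
    Finset.sum_mul, Finset.mul_sum, ite_mul, zero_mul, mul_ite, mul_zero]
  simp only [hite, ite_mul, zero_mul, mul_ite, mul_zero,
    Finset.sum_ite_eq', Finset.sum_ite_eq, Finset.mem_univ, if_true]
  rw [← Finset.sum_add_distrib]
  refine Finset.sum_congr rfl fun x _ => ?_
  rw [Finset.sum_comm]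
  simp only [Finset.sum_ite_eq, Finset.sum_ite_eq', Finset.mem_univ, if_true]
  have r1 : (Real.sqrt (a x) : ℂ) * Real.sqrt (a x) = (a x : ℂ) := by
    rw [← Complex.ofReal_mul, Real.mul_self_sqrt (ha x)]
  have r2 : (Real.sqrt (b x) : ℂ) * Real.sqrt (b x) = (b x : ℂ) := by
    rw [← Complex.ofReal_mul, Real.mul_self_sqrt (hb x)]
  have r3 : (Real.sqrt (a i) : ℂ) * Real.sqrt (a i) = (a i : ℂ) := by
    rw [← Complex.ofReal_mul, Real.mul_self_sqrt (ha i)]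
  have r4 : (Real.sqrt (b i) : ℂ) * Real.sqrt (b i) = (b i : ℂ) := by
    rw [← Complex.ofReal_mul, Real.mul_self_sqrt (hb i)]
  have r5 : (Real.sqrt (a i) : ℂ) * Real.sqrt (b i) = 0 := by
    rw [← Complex.ofReal_mul, hsab i, Complex.ofReal_zero]
  linear_combination (G x x * ((Real.sqrt (a x) : ℂ) * Real.sqrt (a x))) * r3
    + (G x x * (a i : ℂ)) * r1
    + (G x x * ((Real.sqrt (b x) : ℂ) * Real.sqrt (b x))) * r4
    + (G x x * (b i : ℂ)) * r2
    + (2 * G x x * (Real.sqrt (a x) : ℂ) * Real.sqrt (b x)) * r5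

/-- With `a, b, C₀, C₁, ρ₀, ρ₁` as before, `τ > 0`,
`G⊥ := (τ/2)(ρ₀ − ρ₁)` and `G` Hermitian with `tr(G⊥(G − G⊥)) = 0`, we have
`⟨C₀,(G⊗I)C₀⟩ − ⟨C₁,(G⊗I)C₁⟩ = 2·tr(G⊥²)/τ > 0`; in particular, with
`P = C₀C₀† + C₁C₁†`, the compression `P(G⊗I)P` is not a scalar multiple of `P`. -/
theorem stmt2 (d : ℕ) (hd : 1 ≤ d) (a b : Fin d → ℝ)
    (ha : ∀ i, 0 ≤ a i) (hb : ∀ i, 0 ≤ b i)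
    (hsa : ∑ i, a i = 1) (hsb : ∑ i, b i = 1) (hab : ∀ i, a i * b i = 0)
    (τ : ℝ) (hτ : 0 < τ)
    (Gperp : Matrix (Fin d) (Fin d) ℂ)
    (hGperp : Gperp = ((τ : ℂ) / 2) •
      (Matrix.diagonal (fun i => (a i : ℂ)) - Matrix.diagonal (fun i => (b i : ℂ))))
    (G : Matrix (Fin d) (Fin d) ℂ) (hG : G.IsHermitian)
    (horth : (Gperp * (G - Gperp)).trace = 0) :
    innPA (codeword a) (applyBI G (codeword a))
      - innPA (codeword b) (applyBI G (codeword b))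
      = 2 * (Gperp ^ 2).trace / (τ : ℂ) ∧
    0 < 2 * (Gperp ^ 2).trace / (τ : ℂ) ∧
    (∀ c : ℂ,
      (rankOne (codeword a) + rankOne (codeword b)) * matBI G
          * (rankOne (codeword a) + rankOne (codeword b))
        ≠ c • (rankOne (codeword a) + rankOne (codeword b))) := by
  have hτC : (τ : ℂ) ≠ 0 := Complex.ofReal_ne_zero.mpr hτ.ne'
  -- trace of Gperp * G
  have htrG : (Gperp * G).trace = ((τ:ℂ)/2) * ∑ i, ((a i : ℂ) - b i) * G i i := by
    rw [hGperp]
    simp only [Matrix.trace, Matrix.diag, Matrix.mul_apply, Matrix.smul_apply, Matrix.sub_apply,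
      Matrix.diagonal_apply, Finset.mul_sum]
    congr 1; ext i
    rw [Finset.sum_eq_single i]
    · simp; ring
    · intro j _ hj; simp [hj, Ne.symm hj]
    · simp
  -- trace of Gperp²
  have htr2 : (Gperp ^ 2).trace = ((((τ/2)^2 * ∑ i, (a i - b i)^2 : ℝ)) : ℂ) := by
    rw [hGperp, sq]
    simp only [Matrix.trace, Matrix.diag, Matrix.mul_apply, Matrix.smul_apply, Matrix.sub_apply,
      Matrix.diagonal_apply]
    push_cast [Finset.mul_sum]
    congr 1; ext i
    rw [Finset.sum_eq_single i]
    · simp; ring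
    · intro j _ hj; simp [hj, Ne.symm hj]
    · simp
  -- orthogonality: tr(Gperp²) = tr(Gperp G)
  have htreq : (Gperp ^ 2).trace = (Gperp * G).trace := by
    have := horth
    rw [mul_sub, Matrix.trace_sub, sub_eq_zero] at this
    rw [sq]; exact this.symm
  -- the key difference
  have hdiff : innPA (codeword a) (applyBI G (codeword a))
      - innPA (codeword b) (applyBI G (codeword b))
      = ∑ i, ((a i : ℂ) - b i) * G i i := by
    rw [quad_codeword a ha G, quad_codeword b hb G, ← Finset.sum_sub_distrib]
    congr 1; ext i; ring
  have h1 : innPA (codeword a) (applyBI G (codeword a))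
      - innPA (codeword b) (applyBI G (codeword b))
      = 2 * (Gperp ^ 2).trace / (τ : ℂ) := by
    rw [hdiff, htreq, htrG]
    field_simp
  -- positivity
  obtain ⟨i0, hi0⟩ : ∃ i, a i ≠ 0 := by
    by_contra h'; push_neg at h'
    rw [Finset.sum_congr rfl fun i _ => h' i] at hsa; simp at hsa
  obtain ⟨j0, hj0⟩ : ∃ j, b j ≠ 0 := by
    by_contra h'; push_neg at h'
    rw [Finset.sum_congr rfl fun j _ => h' j] at hsb; simp at hsb
  have hbi0 : b i0 = 0 := by
    rcases mul_eq_zero.mp (hab i0) with h | h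
    · exact absurd h hi0
    · exact h
  have haj0 : a j0 = 0 := by
    rcases mul_eq_zero.mp (hab j0) with h | h
    · exact h
    · exact absurd h hj0
  have hsumpos : 0 < ∑ i, (a i - b i)^2 := by
    have hle : (a i0 - b i0)^2 ≤ ∑ i, (a i - b i)^2 :=
      Finset.single_le_sum (f := fun i => (a i - b i)^2) (fun i _ => sq_nonneg _)
        (Finset.mem_univ i0)
    have : 0 < (a i0 - b i0)^2 := by
      rw [hbi0, sub_zero]
      exact pow_pos (lt_of_le_of_ne (ha i0) (Ne.symm hi0)) 2
    linarith
  have h2 : 0 < 2 * (Gperp ^ 2).trace / (τ : ℂ) := by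
    have hval : 2 * (Gperp ^ 2).trace / (τ : ℂ)
        = (((τ/2) * ∑ i, (a i - b i)^2 : ℝ) : ℂ) := by
      rw [htr2]
      push_cast
      field_simp
    rw [hval]
    rw [Complex.zero_lt_real]
    positivity
  refine ⟨h1, h2, ?_⟩
  -- part 3
  intro c hc
  set Sa : ℂ := ∑ m, (a m : ℂ) * G m m with hSa
  set Sb : ℂ := ∑ m, (b m : ℂ) * G m m with hSb
  have ei0 := congrFun (congrFun hc (i0, i0)) (i0, i0)
  have ej0 := congrFun (congrFun hc (j0, j0)) (j0, j0)
  rw [entry_PGP a b ha hb hab G i0] at ei0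
  rw [entry_PGP a b ha hb hab G j0] at ej0
  simp only [Matrix.smul_apply, Matrix.add_apply, rankOne, codeword, Matrix.of_apply,
    if_true, Complex.conj_ofReal, smul_eq_mul] at ei0 ej0
  have sqa : (Real.sqrt (a i0) : ℂ) * (starRingEnd ℂ) (Real.sqrt (a i0) : ℂ) = (a i0 : ℂ) := by
    rw [Complex.conj_ofReal, ← Complex.ofReal_mul, Real.mul_self_sqrt (ha i0)]
  have sqb : (Real.sqrt (b j0) : ℂ) * (starRingEnd ℂ) (Real.sqrt (b j0) : ℂ) = (b j0 : ℂ) := by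
    rw [Complex.conj_ofReal, ← Complex.ofReal_mul, Real.mul_self_sqrt (hb j0)]
  rw [hbi0] at ei0
  rw [haj0] at ej0
  have ra : (Real.sqrt (a i0) : ℂ) * Real.sqrt (a i0) = (a i0 : ℂ) := by
    rw [← Complex.ofReal_mul, Real.mul_self_sqrt (ha i0)]
  have rb : (Real.sqrt (b j0) : ℂ) * Real.sqrt (b j0) = (b j0 : ℂ) := by
    rw [← Complex.ofReal_mul, Real.mul_self_sqrt (hb j0)]
  have hai0C : (a i0 : ℂ) ≠ 0 := Complex.ofReal_ne_zero.mpr hi0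
  have hbj0C : (b j0 : ℂ) ≠ 0 := Complex.ofReal_ne_zero.mpr hj0
  have hSac : Sa = c := by
    have e : (a i0 : ℂ) * Sa = (a i0 : ℂ) * c := by
      simp only [Real.sqrt_zero, Complex.ofReal_zero, zero_mul, mul_zero, add_zero,
        zero_add, ra] at ei0
      linear_combination ei0
    exact mul_left_cancel₀ hai0C e
  have hSbc : Sb = c := by
    have e : (b j0 : ℂ) * Sb = (b j0 : ℂ) * c := by
      simp only [Real.sqrt_zero, Complex.ofReal_zero, zero_mul, mul_zero, add_zero,
        zero_add, rb] at ej0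
      linear_combination ej0
    exact mul_left_cancel₀ hbj0C e
  have hzero : innPA (codeword a) (applyBI G (codeword a))
      - innPA (codeword b) (applyBI G (codeword b)) = 0 := by
    rw [quad_codeword a ha G, quad_codeword b hb G, ← hSa, ← hSb, hSac, hSbc, sub_self]
  rw [h1] at hzero
  exact absurd hzero (ne_of_gt h2)
end

section
/- Let U : ℂ^k → ℂ^d be an isometry with code-space projector P = UU†, and let ℰ be a set of errors, i.e., linear maps E : ℂ^d ⊗ ℂ^{d_E} → ℂ^{d'} ⊗ ℂ^{d'_E}. Suppose there exist d_S ≥ 1 and an isometry V : ℂ^{d'} → ℂ^k ⊗ ℂ^{d_S} such that for every E ∈ ℰ, every ψ ∈ ℂ^k, and every φ ∈ ℂ^{d_E}, there exists a vector S ∈ ℂ^{d_S} ⊗ ℂ^{d'_E} with (V ⊗ I_{d'_E}) E ((Uψ) ⊗ φ) = ψ ⊗ S, under the canonical identification (ℂ^k ⊗ ℂ^{d_S}) ⊗ ℂ^{d'_E} ≅ ℂ^k ⊗ (ℂ^{d_S} ⊗ ℂ^{d'_E}). Then for all E_i, E_j ∈ ℰ, all standard basis indices l, n of ℂ^{d_E},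 and all standard basis indices m, q of ℂ^{d'_E}, there exists a scalar c ∈ ℂ such that P · (Ẽ_{E_i,m,l})† · Ẽ_{E_j,q,n} · P = c·P. -/
open scoped BigOperators
open Matrix

/-- Tensor (Kronecker) product of two vectors. -/
def tens {n m : Type*} (u : n → ℂ) (v : m → ℂ) : n × m → ℂ := fun p => u p.1 * v p.2

/-- Kronecker product of two matrices. -/
def kron {n₁ m₁ n₂ m₂ : Type*} (A : Matrix n₁ m₁ ℂ) (B : Matrix n₂ m₂ ℂ) :
    Matrix (n₁ × n₂) (m₁ × m₂) ℂ :=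
  Matrix.of fun p q => A p.1 q.1 * B p.2 q.2

/-- The reduced (extended) error `Ẽ_{E,n,l} = (I ⊗ eₙ†) E (I ⊗ e_l)` of an error
`E : ℂ^d ⊗ ℂ^{d_E} → ℂ^{d'} ⊗ ℂ^{d'_E}` (probe factor first, environment factor second). -/
def redErr {d d' dE d'E : ℕ} (E : Matrix (Fin d' × Fin d'E) (Fin d × Fin dE) ℂ)
    (n : Fin d'E) (l : Fin dE) : Matrix (Fin d') (Fin d) ℂ :=
  Matrix.of fun p q => E (p, n) (q, l)

/-- Isometries preserve dot products. -/
lemma iso_dot {k dS d' : ℕ} (V : Matrix (Fin k × Fin dS) (Fin d') ℂ) (hV : Vᴴ * V = 1)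
    (x y : Fin d' → ℂ) :
    star (V.mulVec x) ⬝ᵥ (V.mulVec y) = star x ⬝ᵥ y := by
  rw [Matrix.star_mulVec, Matrix.dotProduct_mulVec, Matrix.vecMul_vecMul, hV,
    Matrix.vecMul_one]

/-- Slicing the output of `kron V 1` at environment index `e` gives `V` applied to
the slice of the input. -/
lemma kron_slice {k dS d' d'E : ℕ} (V : Matrix (Fin k × Fin dS) (Fin d') ℂ)
    (z : Fin d' × Fin d'E → ℂ) (a : Fin k) (s : Fin dS) (e : Fin d'E) :
    ((kron V (1 : Matrix (Fin d'E) (Fin d'E) ℂ)).mulVec z) ((a, s), e)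
      = (V.mulVec (fun p => z (p, e))) (a, s) := by
  simp only [Matrix.mulVec, dotProduct, kron, Matrix.of_apply,
    Fintype.sum_prod_type, Matrix.one_apply, mul_ite, mul_one, mul_zero, ite_mul, zero_mul]
  rw [Finset.sum_comm]
  simp

/-- The corrupted encoded states of basis vectors all share the same syndrome vector. -/
lemma key {k d d' dE d'E dS : ℕ}
    (U : Matrix (Fin d) (Fin k) ℂ)
    (E : Matrix (Fin d' × Fin d'E) (Fin d × Fin dE) ℂ)
    (V : Matrix (Fin k × Fin dS) (Fin d') ℂ)
    (φ : Fin dE → ℂ)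
    (h : ∀ (ψ : Fin k → ℂ),
      ∃ S : Fin dS × Fin d'E → ℂ, ∀ a s e,
        ((kron V (1 : Matrix (Fin d'E) (Fin d'E) ℂ)).mulVec
          (E.mulVec (tens (U.mulVec ψ) φ))) ((a, s), e) = ψ a * S (s, e)) :
    ∃ S : Fin dS × Fin d'E → ℂ, ∀ (b : Fin k) (a : Fin k) s e,
      ((kron V (1 : Matrix (Fin d'E) (Fin d'E) ℂ)).mulVec
          (E.mulVec (tens (U.mulVec (Pi.single b 1)) φ))) ((a, s), e)
        = (if a = b then S (s, e) else 0) := by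
  classical
  -- the whole map as a single matrix applied to ψ
  set N : Matrix (Fin d × Fin dE) (Fin k) ℂ := Matrix.of fun i b => U i.1 b * φ i.2 with hN
  have hNv : ∀ ψ, N.mulVec ψ = tens (U.mulVec ψ) φ := by
    intro ψ; funext i
    simp only [Matrix.mulVec, dotProduct, tens, hN, Matrix.of_apply, Finset.sum_mul]
    exact Finset.sum_congr rfl fun b _ => by ring
  set M := (kron V (1 : Matrix (Fin d'E) (Fin d'E) ℂ)) * E * N with hM
  have hMv : ∀ ψ, M.mulVec ψ
      = (kron V (1 : Matrix (Fin d'E) (Fin d'E) ℂ)).mulVec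
          (E.mulVec (tens (U.mulVec ψ) φ)) := by
    intro ψ
    rw [hM, ← hNv, ← Matrix.mulVec_mulVec, ← Matrix.mulVec_mulVec]
  obtain ⟨S, hS⟩ := h (fun _ => 1)
  have hSb : ∀ b : Fin k, ∃ Sb : Fin dS × Fin d'E → ℂ, ∀ a s e,
      (M.mulVec (Pi.single b 1)) ((a, s), e) = (Pi.single b 1 : Fin k → ℂ) a * Sb (s, e) := by
    intro b
    obtain ⟨Sb, hSb⟩ := h (Pi.single b 1)
    exact ⟨Sb, fun a s e => by rw [hMv]; exact hSb a s e⟩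
  choose Sb hSb using hSb
  refine ⟨S, fun b a s e => ?_⟩
  rw [← hMv, hSb]
  by_cases hab : a = b
  · subst hab
    simp only [Pi.single_eq_same, one_mul, if_pos rfl]
    -- show Sb a (s,e) = S (s,e) using linearity
    have hone : (fun _ : Fin k => (1 : ℂ)) = ∑ b' : Fin k, Pi.single b' (1 : ℂ) := by
      funext j; simp [Pi.single_apply]
    have h1 : (M.mulVec (fun _ => 1)) ((a, s), e) = S (s, e) := by
      rw [hMv]; simpa using hS a s e
    rw [hone] at h1
    have h2 : (M.mulVec (∑ b' : Fin k, Pi.single b' (1 : ℂ))) ((a, s), e)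
        = ∑ b' : Fin k, (M.mulVec (Pi.single b' 1)) ((a, s), e) := by
      rw [show M.mulVec (∑ b' : Fin k, Pi.single b' (1 : ℂ))
            = ∑ b' : Fin k, M.mulVec (Pi.single b' 1) from by
        simp only [← Matrix.mulVecLin_apply]; exact map_sum _ _ _]
      simp
    rw [h2] at h1
    have h3 : ∀ b' : Fin k, (M.mulVec (Pi.single b' 1)) ((a, s), e)
        = if a = b' then Sb b' (s, e) else 0 := by
      intro b'; rw [hSb]; simp [Pi.single_apply, eq_comm]
    simp only [h3] at h1
    rw [Finset.sum_ite_eq (Finset.univ) a (fun b' => Sb b' (s, e))] at h1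
    simpa using h1
  · simp [Pi.single_apply, hab]

/-- necessity of the Knill–Laflamme conditions for the HMM.
If there is an isometry `V : ℂ^{d'} → ℂ^k ⊗ ℂ^{d_S}` sending every corrupted encoded state
`E((Uψ) ⊗ φ)` to `ψ ⊗ S` for some `S`, then the generalized KL conditions
`P Ẽ_{E_i,m,l}† Ẽ_{E_j,q,n} P = c P` hold. -/
theorem stmt3 (k d d' dE d'E dS : ℕ) (hdS : 1 ≤ dS)
    (U : Matrix (Fin d) (Fin k) ℂ) (hU : Uᴴ * U = 1)
    (ℰ : Set (Matrix (Fin d' × Fin d'E) (Fin d × Fin dE) ℂ))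
    (V : Matrix (Fin k × Fin dS) (Fin d') ℂ) (hV : Vᴴ * V = 1)
    (hcorr : ∀ E ∈ ℰ, ∀ (ψ : Fin k → ℂ) (φ : Fin dE → ℂ),
      ∃ S : Fin dS × Fin d'E → ℂ, ∀ (a : Fin k) (s : Fin dS) (e : Fin d'E),
        ((kron V (1 : Matrix (Fin d'E) (Fin d'E) ℂ)).mulVec
            (E.mulVec (tens (U.mulVec ψ) φ))) ((a, s), e) = ψ a * S (s, e)) :
    ∀ Ei ∈ ℰ, ∀ Ej ∈ ℰ, ∀ (l n : Fin dE) (m q : Fin d'E),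
      ∃ c : ℂ, (U * Uᴴ) * (redErr Ei m l)ᴴ * redErr Ej q n * (U * Uᴴ)
        = c • (U * Uᴴ) := by
  classical
  intro Ei hEi Ej hEj l n m q
  obtain ⟨Si, hSi⟩ := key U Ei V (Pi.single l 1) (fun ψ => hcorr Ei hEi ψ (Pi.single l 1))
  obtain ⟨Sj, hSj⟩ := key U Ej V (Pi.single n 1) (fun ψ => hcorr Ej hEj ψ (Pi.single n 1))
  set c : ℂ := ∑ s : Fin dS, star (Si (s, m)) * Sj (s, q) with hc
  refine ⟨c, ?_⟩
  -- reduce to U† A† B U = c • 1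
  have hmid : Uᴴ * (redErr Ei m l)ᴴ * redErr Ej q n * U
      = c • (1 : Matrix (Fin k) (Fin k) ℂ) := by
    have hfac : Uᴴ * (redErr Ei m l)ᴴ * redErr Ej q n * U
        = (redErr Ei m l * U)ᴴ * (redErr Ej q n * U) := by
      rw [Matrix.conjTranspose_mul]; simp only [Matrix.mul_assoc]
    rw [hfac]
    ext a b
    -- express columns via the corrupted encoded states
    have hcolA : ∀ p : Fin d', (∑ j, redErr Ei m l p j * U j a)
        = (Ei.mulVec (tens (U.mulVec (Pi.single a 1)) (Pi.single l 1))) (p, m) := by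
      intro p
      simp only [Matrix.mulVec, dotProduct, tens, redErr,
        Matrix.of_apply, Fintype.sum_prod_type, Pi.single_apply]
      refine Finset.sum_congr rfl fun t _ => ?_
      rw [Finset.sum_eq_single l (by intro j _ hj; simp [hj]) (by simp)]
      simp [Finset.sum_ite_eq, mul_comm]
    have hcolB : ∀ p : Fin d', (∑ j, redErr Ej q n p j * U j b)
        = (Ej.mulVec (tens (U.mulVec (Pi.single b 1)) (Pi.single n 1))) (p, q) := by
      intro p
      simp only [Matrix.mulVec, dotProduct, tens, redErr,
        Matrix.of_apply, Fintype.sum_prod_type, Pi.single_apply]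
      refine Finset.sum_congr rfl fun t _ => ?_
      rw [Finset.sum_eq_single n (by intro j _ hj; simp [hj]) (by simp)]
      simp [Finset.sum_ite_eq, mul_comm]
    set x : Fin d' → ℂ :=
      fun p => (Ei.mulVec (tens (U.mulVec (Pi.single a 1)) (Pi.single l 1))) (p, m) with hx
    set y : Fin d' → ℂ :=
      fun p => (Ej.mulVec (tens (U.mulVec (Pi.single b 1)) (Pi.single n 1))) (p, q) with hy
    have hentry : ((redErr Ei m l * U)ᴴ * (redErr Ej q n * U)) a b = star x ⬝ᵥ y := by
      simp only [Matrix.mul_apply, Matrix.conjTranspose_apply, dotProduct,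
        Pi.star_apply, hx, hy]
      exact Finset.sum_congr rfl fun p _ => by rw [hcolA, hcolB]
    rw [hentry, ← iso_dot V hV x y]
    have hVx : ∀ (a' : Fin k) (s : Fin dS),
        (V.mulVec x) (a', s) = if a' = a then Si (s, m) else 0 := by
      intro a' s
      rw [show (V.mulVec x) (a', s)
          = ((kron V (1 : Matrix (Fin d'E) (Fin d'E) ℂ)).mulVec
              (Ei.mulVec (tens (U.mulVec (Pi.single a 1)) (Pi.single l 1)))) ((a', s), m) from
          (kron_slice V _ a' s m).symm]
      exact hSi a a' s m
    have hVy : ∀ (a' : Fin k) (s : Fin dS),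
        (V.mulVec y) (a', s) = if a' = b then Sj (s, q) else 0 := by
      intro a' s
      rw [show (V.mulVec y) (a', s)
          = ((kron V (1 : Matrix (Fin d'E) (Fin d'E) ℂ)).mulVec
              (Ej.mulVec (tens (U.mulVec (Pi.single b 1)) (Pi.single n 1)))) ((a', s), q) from
          (kron_slice V _ a' s q).symm]
      exact hSj b a' s q
    have : star (V.mulVec x) ⬝ᵥ (V.mulVec y)
        = if a = b then c else 0 := by
      simp only [dotProduct, Pi.star_apply, Fintype.sum_prod_type, hVx, hVy, hc]
      by_cases hab : a = b
      · subst hab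
        rw [Finset.sum_eq_single a ?_ (by simp)]
        · simp
        · intro a' _ ha'; simp [ha']
      · rw [Finset.sum_eq_zero]
        · simp [hab]
        · intro a' _
          by_cases h1 : a' = a
          · subst h1; simp [hab]
          · simp [h1]
    rw [this]
    simp [Matrix.smul_apply, Matrix.one_apply, mul_comm]
  calc (U * Uᴴ) * (redErr Ei m l)ᴴ * redErr Ej q n * (U * Uᴴ)
      = U * (Uᴴ * (redErr Ei m l)ᴴ * redErr Ej q n * U) * Uᴴ := by
        simp only [Matrix.mul_assoc]
    _ = U * (c • (1 : Matrix (Fin k) (Fin k) ℂ)) * Uᴴ := by rw [hmid]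
    _ = c • (U * Uᴴ) := by
        rw [Matrix.mul_smul, Matrix.mul_one, Matrix.smul_mul]
end

section
/- Let M ∈ ℕ, let c : Fin M → ℂ and φ : Fin M → ℝ, and define f(t) = Σ_m c_m · exp(−i·t·φ_m) for t ∈ ℝ. Then for every ε > 0 and every t₀ ∈ ℝ there exists t > t₀ with |f(t) − f(0)| < ε. Consequently, limsup_{t→∞} |f(t)| ≥ |Σ_m c_m|. -/
/-!
Writing `f t = F (γ t)` with `γ t = (exp (-i t φ_m))_m` in the compact torus `(S¹)^M` and `F`
continuous, the values `f n = F (γ 1 ^ n)` at natural numbers `n` come back near `f 0` infinitely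
often: in a compact group the powers of any element return arbitrarily close to `1`, since two
visits near a cluster point of the sequence `g ^ n` differ by a power close to `1`. Thus `f 0` is
a cluster point of `f` at `+∞`, and as `f` is bounded, `‖f 0‖` is at most `limsup ‖f‖`.
-/

open Filter Topology

section CompactGroup

variable {G : Type*} [Group G] [TopologicalSpace G] [IsTopologicalGroup G] [CompactSpace G]

theorem mapClusterPt_one_pow (g : G) : MapClusterPt 1 atTop (g ^ · : ℕ → G) := by
  obtain ⟨a, -, ha⟩ := isCompact_univ.exists_mapClusterPt (f := atTop) (u := (g ^ · : ℕ → G))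
    (by simp)
  refine mapClusterPt_iff_frequently.2 fun U hU => frequently_atTop.2 fun N => ?_
  obtain ⟨V, hV, hVU⟩ := exists_nhds_split_inv hU
  have hW : {x : G | x * a⁻¹ ∈ V} ∈ 𝓝 a :=
    (continuous_mul_const a⁻¹).continuousAt.preimage_mem_nhds (by simpa using hV)
  obtain ⟨n₁, -, hn₁⟩ := frequently_atTop.1 (mapClusterPt_iff_frequently.1 ha _ hW) 0
  obtain ⟨n₂, hn₂, hn₂W⟩ := frequently_atTop.1 (mapClusterPt_iff_frequently.1 ha _ hW) (n₁ + N)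
  refine ⟨n₂ - n₁, by omega, ?_⟩
  simpa [pow_sub g (show n₁ ≤ n₂ by omega), div_eq_mul_inv, mul_assoc] using hVU _ hn₂W _ hn₁

theorem mapClusterPt_comp_of_pow {X : Type*} [TopologicalSpace X] {F : G → X} (hF : Continuous F)
    {γ : ℝ → G} (hγ : ∀ n : ℕ, γ n = γ 1 ^ n) : MapClusterPt (F (γ 0)) atTop (F ∘ γ) := by
  have hγ0 : γ 0 = 1 := by simpa using hγ 0
  refine .of_comp tendsto_natCast_atTop_atTop ?_
  have hpow : (F ∘ γ) ∘ Nat.cast = F ∘ (γ 1 ^ · : ℕ → G) := funext fun n => by simp [hγ]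
  rw [hγ0, hpow]
  exact (mapClusterPt_one_pow (γ 1)).continuousAt_comp hF.continuousAt

end CompactGroup

/-- A finite exponential polynomial `f(t) = Σ_m c_m·exp(−i·t·φ_m)` is almost
periodic: for every `ε > 0` and every `t₀` there is `t > t₀` with `|f(t) − f(0)| < ε`.
Consequently `limsup_{t→∞} |f(t)| ≥ |Σ_m c_m|`. -/
theorem stmt8 (M : ℕ) (c : Fin M → ℂ) (φ : Fin M → ℝ)
    (f : ℝ → ℂ) (hf : ∀ t : ℝ, f t = ∑ m, c m * Complex.exp (-(Complex.I * t * (φ m : ℂ)))) :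
    (∀ ε : ℝ, 0 < ε → ∀ t₀ : ℝ, ∃ t : ℝ, t₀ < t ∧ ‖f t - f 0‖ < ε) ∧
    ‖∑ m, c m‖ ≤ Filter.limsup (fun t : ℝ => ‖f t‖) Filter.atTop := by
  set F : (Fin M → Circle) → ℂ := fun z => ∑ m, c m * z m
  have hF : Continuous F := by fun_prop
  set γ : ℝ → Fin M → Circle := fun t m => Circle.exp (-(t * φ m))
  have hγ : ∀ n : ℕ, γ n = γ 1 ^ n := fun n => by
    ext1 m
    simp [γ, ← mul_neg]
  have hfF : f = F ∘ γ := funext fun t => by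
    simp only [hf, Function.comp, F, γ, Circle.coe_exp]
    push_cast
    ring_nf
  have hf0 : f 0 = ∑ m, c m := by simp [hf]
  have hcluster : MapClusterPt (f 0) atTop f := hfF ▸ mapClusterPt_comp_of_pow hF hγ
  refine ⟨fun ε hε t₀ => ?_, ?_⟩
  · obtain ⟨t, ht, hft⟩ := frequently_atTop'.1
      (mapClusterPt_iff_frequently.1 hcluster _ (Metric.ball_mem_nhds _ hε)) t₀
    exact ⟨t, ht, by rwa [Metric.mem_ball, dist_eq_norm] at hft⟩
  · obtain ⟨C, hC⟩ := isCompact_univ.exists_bound_of_continuousOn hF.continuousOn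
    have hbdd : IsBoundedUnder (· ≤ ·) atTop (fun t => ‖f t‖) :=
      isBoundedUnder_of ⟨C, fun t => hfF ▸ hC _ (Set.mem_univ _)⟩
    exact hf0 ▸ (hcluster.continuousAt_comp continuous_norm.continuousAt).le_limsup hbdd
end

section
/- Let τ ∈ ℝ and α ∈ ℂ with 0 < |α| ≤ 1/2. For ω ∈ ℝ let ρ(ω) be the 2×2 matrix with diagonal entries 1/2, top-right entry exp(−i·ω·τ)·α, and bottom-left entry exp(i·ω·τ)·conj(α); let ρ'(ω) denote its entrywise derivative in ω. Let γ₊ = 1/2 + |α|, γ₋ = 1/2 − |α| with corresponding orthonormal eigenvectors v₊, v₋ of ρ(ω) (namely v_± = (1/√2)(e₁ ± (conj(z)/|z|)e₂) with z = exp(−i·ω·τ)·α). Then the quantum Fisher information 2·Σ_{(i,j): γ_i + γ_j > 0} |⟨v_i, ρ'(ω) v_j⟩|²/(γ_i + γ_j), where i, j range over {+, −}, equals 4·τ²·|α|². -/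
/-!
Differentiating the phase gives `ρ' = iτ [[0, -z], [conj z, 0]]`. Writing
`v± = (e₁ ± u e₂)/√2` with `u = conj z/|z|`, so that `z u = |z|` is real, one finds
`⟨v_i, ρ' v_j⟩ = iτ|z|(σ_i - σ_j)/2` with `σ = (1, -1)`: the diagonal terms vanish and the
two off-diagonal ones have modulus `τ|z| = τ|α|` and weight `γ₊ + γ₋ = 1`.
-/

open scoped BigOperators

/-- The standard inner product on `ℂ²`, conjugate-linear in the first slot. -/
noncomputable def inn2 (x y : Fin 2 → ℂ) : ℂ := ∑ i, (starRingEnd ℂ) (x i) * y i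

open Complex ComplexConjugate Matrix

lemma mul_conj_div_norm (z : ℂ) : z * (conj z / ‖z‖) = ‖z‖ := by
  rcases eq_or_ne z 0 with rfl | hz
  · simp
  have : (‖z‖ : ℂ) ≠ 0 := by simpa using hz
  rw [← mul_div_assoc, mul_conj, normSq_eq_norm_sq]
  field_simp
  push_cast
  ring

lemma inn2_mulVec_offDiag (p q : ℂ) (x y : Fin 2 → ℂ) :
    inn2 x (!![0, p; q, 0] *ᵥ y) = conj (x 0) * p * y 1 + conj (x 1) * q * y 0 := by
  simp only [inn2, mulVec, dotProduct, of_apply, cons_val', cons_val_fin_one, Fin.sum_univ_two,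
    cons_val_zero, cons_val_one, zero_mul, zero_add, add_zero]
  ring

lemma hasDerivAt_cexp_ofReal_mul_mul (c a : ℂ) (ω : ℝ) :
    HasDerivAt (fun w : ℝ => cexp (w * c) * a) (c * cexp (ω * c) * a) ω := by
  have := ((hasDerivAt_id (ω : ℂ)).mul_const c).cexp.comp_ofReal.mul_const a
  simpa [mul_comm] using this

lemma hasDerivAt_phaseFamily_apply (τ : ℝ) (α : ℂ) (ω : ℝ) (i j : Fin 2) :
    HasDerivAt (fun w : ℝ => (!![1/2, cexp (-(I * w * τ)) * α;
        cexp (I * w * τ) * conj α, 1/2] : Matrix (Fin 2) (Fin 2) ℂ) i j)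
      ((!![0, -(I * τ) * (cexp (-(I * ω * τ)) * α);
        I * τ * conj (cexp (-(I * ω * τ)) * α), 0] : Matrix (Fin 2) (Fin 2) ℂ) i j) ω := by
  fin_cases i <;> fin_cases j <;>
    simp only [Fin.zero_eta, Fin.mk_one, of_apply, cons_val', cons_val_one, cons_val_fin_one,
      cons_val_zero]
  · exact hasDerivAt_const _ _
  · convert hasDerivAt_cexp_ofReal_mul_mul (-(I * τ)) α ω using 1
    · ext w; ring_nf
    · ring_nf
  · convert hasDerivAt_cexp_ofReal_mul_mul (I * τ) (conj α) ω using 1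
    · ext w; ring_nf
    · simp only [map_mul, ← Complex.exp_conj, map_neg, conj_I, conj_ofReal]; ring_nf
  · exact hasDerivAt_const _ _

lemma inn2_signedVec_mulVec_offDiag (c z ε δ : ℂ) :
    inn2 ![1 / (√2 : ℂ), ε * (1 / (√2 : ℂ) * (conj z / ‖z‖))]
        (!![0, -c * z; c * conj z, 0] *ᵥ ![1 / (√2 : ℂ), δ * (1 / (√2 : ℂ) * (conj z / ‖z‖))])
      = c * ‖z‖ * (conj ε - δ) / 2 := by
  have hs : (1 / (√2 : ℂ)) ^ 2 = 1 / 2 := by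
    rw [div_pow, ← ofReal_pow, Real.sq_sqrt zero_le_two]; norm_num
  have hz := mul_conj_div_norm z
  have hz' : conj z * (z / ‖z‖) = ‖z‖ := by
    rw [mul_comm, div_mul_eq_mul_div, mul_div_assoc]; exact hz
  rw [inn2_mulVec_offDiag]
  simp only [cons_val_zero, cons_val_one, cons_val_fin_one, map_mul, map_div₀, map_one,
    conj_ofReal, conj_conj]
  linear_combination (1 / (√2 : ℂ)) ^ 2 * c * (-δ * hz + conj ε * hz') + c * ‖z‖ * (conj ε - δ) * hs

theorem stmt10_general (τ : ℝ) (α : ℂ)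
    (ω : ℝ)
    (ρ : ℝ → Matrix (Fin 2) (Fin 2) ℂ)
    (hρ : ∀ w : ℝ, ρ w = !![(1/2 : ℂ), Complex.exp (-(Complex.I * w * τ)) * α;
        Complex.exp (Complex.I * w * τ) * (starRingEnd ℂ) α, (1/2 : ℂ)])
    (ρ' : Matrix (Fin 2) (Fin 2) ℂ)
    (hρ' : ∀ i j : Fin 2, HasDerivAt (fun w : ℝ => ρ w i j) (ρ' i j) ω)
    (γ : Fin 2 → ℝ) (hγ : γ = ![1/2 + ‖α‖, 1/2 - ‖α‖])
    (z : ℂ) (hz : z = Complex.exp (-(Complex.I * ω * τ)) * α)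
    (v : Fin 2 → Fin 2 → ℂ)
    (hv : v = ![![(1 / (Real.sqrt 2 : ℂ)),
          (1 / (Real.sqrt 2 : ℂ)) * ((starRingEnd ℂ) z / (‖z‖ : ℂ))],
        ![(1 / (Real.sqrt 2 : ℂ)),
          -((1 / (Real.sqrt 2 : ℂ)) * ((starRingEnd ℂ) z / (‖z‖ : ℂ)))]]) :
    2 * ∑ i : Fin 2, ∑ j : Fin 2,
        (if 0 < γ i + γ j then
          (‖inn2 (v i) (ρ'.mulVec (v j))‖)^2 / (γ i + γ j)
        else 0)
      = 4 * τ^2 * (‖α‖)^2 := by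
  have hρ'_eq : ρ' = !![0, -(I * τ) * z; I * τ * conj z, 0] := by
    ext i j
    subst hz
    exact (hρ' i j).unique (by simpa only [hρ] using hasDerivAt_phaseFamily_apply τ α ω i j)
  have hv_eq : v = fun i => ![1 / (√2 : ℂ), ![1, -1] i * (1 / (√2 : ℂ) * (conj z / ‖z‖))] := by
    rw [hv]; ext i : 1; fin_cases i <;> simp
  have hnorm : ‖z‖ = ‖α‖ := by
    rw [hz, norm_mul, norm_exp]; simp
  simp only [hρ'_eq, hv_eq, inn2_signedVec_mulVec_offDiag, hγ, Fin.sum_univ_two]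
  norm_num [hnorm, mul_pow, sq_abs]
  ring

/-- For the qubit family `ρ(ω) = [[1/2, e^{−iωτ}α],[e^{iωτ}conj α, 1/2]]`
with `0 < |α| ≤ 1/2`, eigenvalues `γ± = 1/2 ± |α|` and eigenvectors
`v± = (1/√2)(e₁ ± (conj z/|z|)e₂)`, `z = e^{−iωτ}α`, the quantum Fisher information
`2·Σ_{γ_i+γ_j>0} |⟨v_i, ρ'(ω)v_j⟩|²/(γ_i+γ_j)` equals `4τ²|α|²`. -/
theorem stmt10 (τ : ℝ) (α : ℂ) (hα : 0 < ‖α‖) (hα' : ‖α‖ ≤ 1/2)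
    (ω : ℝ)
    (ρ : ℝ → Matrix (Fin 2) (Fin 2) ℂ)
    (hρ : ∀ w : ℝ, ρ w = !![(1/2 : ℂ), Complex.exp (-(Complex.I * w * τ)) * α;
        Complex.exp (Complex.I * w * τ) * (starRingEnd ℂ) α, (1/2 : ℂ)])
    (ρ' : Matrix (Fin 2) (Fin 2) ℂ)
    (hρ' : ∀ i j : Fin 2, HasDerivAt (fun w : ℝ => ρ w i j) (ρ' i j) ω)
    (γ : Fin 2 → ℝ) (hγ : γ = ![1/2 + ‖α‖, 1/2 - ‖α‖])
    (z : ℂ) (hz : z = Complex.exp (-(Complex.I * ω * τ)) * α)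
    (v : Fin 2 → Fin 2 → ℂ)
    (hv : v = ![![(1 / (Real.sqrt 2 : ℂ)),
          (1 / (Real.sqrt 2 : ℂ)) * ((starRingEnd ℂ) z / (‖z‖ : ℂ))],
        ![(1 / (Real.sqrt 2 : ℂ)),
          -((1 / (Real.sqrt 2 : ℂ)) * ((starRingEnd ℂ) z / (‖z‖ : ℂ)))]]) :
    2 * ∑ i : Fin 2, ∑ j : Fin 2,
        (if 0 < γ i + γ j then
          (‖inn2 (v i) (ρ'.mulVec (v j))‖)^2 / (γ i + γ j)
        else 0)
      = 4 * τ^2 * (‖α‖)^2 :=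
  stmt10_general τ α ω ρ hρ ρ' hρ' γ hγ z hz v hv
end

section
/- Consider an HMM with diagonal interactions on ℂ^{d_E} ⊗ ℂ^{d_P}: H_E = Σᵢ hᵢ Eᵢᵢ with hᵢ ∈ ℝ, H_EP = Σᵢ Eᵢᵢ ⊗ Hᵢ with each Hᵢ a Hermitian d_P×d_P matrix, jump operators L_k = Σᵢ Eᵢᵢ ⊗ M_{k,i} for k = 1,…,r, a Hermitian d_P×d_P matrix G, and ω ∈ ℝ, with Lindbladian ℒ(ρ) = −i[H_EP + ω(I_{d_E} ⊗ G) + ω(H_E ⊗ I_{d_P}), ρ] + Σ_k (L_k ρ L_k† − (1/2){L_k†L_k, ρ}). Then ℒ commutes with the environment dephasing map D_E, i.e., ℒ ∘ D_E = D_E ∘ ℒ, and consequently for every t ∈ ℝ and every d_E·d_P × d_E·d_P matrix ρ: Tr_E(exp(t·ℒ)(ρ)) = Tr_E(exp(t·ℒ)(D_E(ρ))). -/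
/-! Every operator entering `ℒ` is block diagonal with respect to the environment basis, and
such matrices form a star subalgebra. Dephasing only deletes the off-diagonal environment
blocks, so `D_E(AρB) = A D_E(ρ) B` for block-diagonal `A`, `B`; as `ℒ` is built from maps
`ρ ↦ AρB` of this kind, it commutes with `D_E`. Hence so does `exp(tℒ)`, and `Tr_E` ignores
the blocks that `D_E` deletes. -/

open scoped BigOperators
open Matrix

/-- The diagonal matrix unit `Eᵢᵢ = eᵢeᵢ†`. -/
def Eii {dE : ℕ} (i : Fin dE) : Matrix (Fin dE) (Fin dE) ℂ :=
  Matrix.single i i 1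

/-- Partial trace over the environment:
`Tr_E(M) = Σᵢ (eᵢ† ⊗ I) M (eᵢ ⊗ I)`. -/
noncomputable def TrE {dE dP : ℕ} (M : Matrix (Fin dE × Fin dP) (Fin dE × Fin dP) ℂ) :
    Matrix (Fin dP) (Fin dP) ℂ :=
  ∑ i : Fin dE, Matrix.of fun p q => M (i, p) (i, q)

/-- The environment dephasing map `D_E(ρ) = Σᵢ (Eᵢᵢ ⊗ I) ρ (Eᵢᵢ ⊗ I)`. -/
noncomputable def DephE {dE dP : ℕ} (ρ : Matrix (Fin dE × Fin dP) (Fin dE × Fin dP) ℂ) :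
    Matrix (Fin dE × Fin dP) (Fin dE × Fin dP) ℂ :=
  ∑ i : Fin dE, kron (Eii i) (1 : Matrix (Fin dP) (Fin dP) ℂ) * ρ
      * kron (Eii i) (1 : Matrix (Fin dP) (Fin dP) ℂ)

/-- The exponential `exp(L)` of an endomorphism of the matrix space, applied to `ρ`,
via its power series. -/
noncomputable def expApply {dE dP : ℕ}
    (L : Module.End ℂ (Matrix (Fin dE × Fin dP) (Fin dE × Fin dP) ℂ))
    (ρ : Matrix (Fin dE × Fin dP) (Fin dE × Fin dP) ℂ) :
    Matrix (Fin dE × Fin dP) (Fin dE × Fin dP) ℂ :=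
  ∑' n : ℕ, ((n.factorial : ℂ)⁻¹) • ((L ^ n) ρ)

open scoped Nat

section Exponential
variable {𝕜 E : Type*} [RCLike 𝕜] [NormedAddCommGroup E] [NormedSpace 𝕜 E]
  [FiniteDimensional 𝕜 E]

theorem Module.End.hasSum_expSeries_apply (L : Module.End 𝕜 E) (x : E) :
    HasSum (fun n : ℕ => (n !⁻¹ : 𝕜) • (L ^ n) x)
      (NormedSpace.exp (LinearMap.toContinuousLinearMap L) x) := by
  have := FiniteDimensional.complete 𝕜 E
  simpa [Module.End.coe_pow] using
    (NormedSpace.exp_series_hasSum_exp' (𝕂 := 𝕜) (LinearMap.toContinuousLinearMap L)).mapL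
      (ContinuousLinearMap.apply 𝕜 E x)

theorem Module.End.tsum_expSeries_apply_map_of_commute {L D : Module.End 𝕜 E}
    (h : Commute L D) (x : E) :
    ∑' n : ℕ, (n !⁻¹ : 𝕜) • (L ^ n) (D x) = D (∑' n : ℕ, (n !⁻¹ : 𝕜) • (L ^ n) x) := by
  have hc : Commute (LinearMap.toContinuousLinearMap L) (LinearMap.toContinuousLinearMap D) :=
    ContinuousLinearMap.ext fun y => LinearMap.congr_fun h y
  rw [(L.hasSum_expSeries_apply _).tsum_eq, (L.hasSum_expSeries_apply _).tsum_eq]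
  exact DFunLike.congr_fun hc.exp_left.eq x

end Exponential

namespace Matrix

section EnvDiagonal
variable {ι κ R : Type*} [DecidableEq ι]

def envDephase [Semiring R] : Matrix (ι × κ) (ι × κ) R →ₗ[R] Matrix (ι × κ) (ι × κ) R where
  toFun ρ := of fun a b => if a.1 = b.1 then ρ a b else 0
  map_add' ρ σ := by ext a b; by_cases h : a.1 = b.1 <;> simp [h]
  map_smul' c ρ := by ext a b; by_cases h : a.1 = b.1 <;> simp [h]

@[simp]
theorem envDephase_apply [Semiring R] (ρ : Matrix (ι × κ) (ι × κ) R) (a b : ι × κ) :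
    envDephase ρ a b = if a.1 = b.1 then ρ a b else 0 :=
  rfl

variable [Fintype ι] [Fintype κ] [DecidableEq κ] [CommSemiring R] [StarRing R]

def envDiagonalSubalgebra : StarSubalgebra R (Matrix (ι × κ) (ι × κ) R) where
  carrier := {A | ∀ a b, a.1 ≠ b.1 → A a b = 0}
  mul_mem' {A B} hA hB a b hab := by
    change (A * B) a b = 0
    refine (mul_apply ..).trans <| Finset.sum_eq_zero fun c _ => ?_
    by_cases hac : a.1 = c.1
    · rw [hB c b (hac ▸ hab), mul_zero]
    · rw [hA a c hac, zero_mul]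
  add_mem' hA hB a b hab := by rw [add_apply, hA a b hab, hB a b hab, add_zero]
  algebraMap_mem' r a b hab := by
    rw [algebraMap_matrix_apply, if_neg (fun h => hab (congrArg Prod.fst h))]
  star_mem' hA a b hab := by
    rw [star_apply, hA b a (Ne.symm hab), star_zero]

variable {A : Matrix (ι × κ) (ι × κ) R}

theorem envDephase_mul_left (hA : A ∈ envDiagonalSubalgebra)
    (ρ : Matrix (ι × κ) (ι × κ) R) :
    envDephase (A * ρ) = A * envDephase ρ := by
  ext a b
  simp only [envDephase_apply, mul_apply]
  split_ifs with hab
  · refine Finset.sum_congr rfl fun c _ => ?_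
    by_cases hac : a.1 = c.1
    · rw [if_pos (hac ▸ hab)]
    · rw [hA a c hac, zero_mul, zero_mul]
  · refine (Finset.sum_eq_zero fun c _ => ?_).symm
    by_cases hac : a.1 = c.1
    · rw [if_neg (hac ▸ hab), mul_zero]
    · rw [hA a c hac, zero_mul]

theorem envDephase_mul_right (hA : A ∈ envDiagonalSubalgebra)
    (ρ : Matrix (ι × κ) (ι × κ) R) :
    envDephase (ρ * A) = envDephase ρ * A := by
  ext a b
  simp only [envDephase_apply, mul_apply]
  split_ifs with hab
  · refine Finset.sum_congr rfl fun c _ => ?_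
    by_cases hcb : c.1 = b.1
    · rw [if_pos (hcb ▸ hab)]
    · rw [hA c b hcb, mul_zero, mul_zero]
  · refine (Finset.sum_eq_zero fun c _ => ?_).symm
    by_cases hcb : c.1 = b.1
    · rw [if_neg (hcb ▸ hab), zero_mul]
    · rw [hA c b hcb, mul_zero]

end EnvDiagonal

end Matrix

noncomputable def lindbladian {n K : Type*} [Fintype n] [Fintype K] (H : Matrix n n ℂ)
    (L : K → Matrix n n ℂ) (ρ : Matrix n n ℂ) : Matrix n n ℂ :=
  -(Complex.I) • (H * ρ - ρ * H)
    + ∑ k, (L k * ρ * (L k)ᴴ - ((1 : ℂ)/2) • ((L k)ᴴ * L k * ρ + ρ * ((L k)ᴴ * L k)))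

section EnvDiagonal
variable {ι κ : Type*} [Fintype ι] [DecidableEq ι] [Fintype κ] [DecidableEq κ]

theorem lindbladian_envDephase {K : Type*} [Fintype K] {H : Matrix (ι × κ) (ι × κ) ℂ}
    {L : K → Matrix (ι × κ) (ι × κ) ℂ} (hH : H ∈ envDiagonalSubalgebra)
    (hL : ∀ k, L k ∈ envDiagonalSubalgebra) (ρ : Matrix (ι × κ) (ι × κ) ℂ) :
    lindbladian H L (envDephase ρ) = envDephase (lindbladian H L ρ) := by
  have hLH : ∀ k, (L k)ᴴ ∈ envDiagonalSubalgebra := fun k => star_mem (hL k)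
  have hLHL : ∀ k, (L k)ᴴ * L k ∈ envDiagonalSubalgebra := fun k => mul_mem (hLH k) (hL k)
  simp only [lindbladian, map_add, map_sub, map_smul, map_sum, envDephase_mul_left hH,
    envDephase_mul_right hH, envDephase_mul_left (hL _), envDephase_mul_right (hLH _),
    envDephase_mul_left (hLHL _), envDephase_mul_right (hLHL _)]

theorem kron_mem_envDiagonalSubalgebra {D : Matrix ι ι ℂ} (hD : D.IsDiag) (X : Matrix κ κ ℂ) :
    kron D X ∈ envDiagonalSubalgebra := fun _ _ hab => by
  simp [kron, hD hab]

end EnvDiagonal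

theorem isDiag_eii {dE : ℕ} (i : Fin dE) : (Eii i).IsDiag := fun a b hab => by
  simp only [Eii, single_apply, ite_eq_right_iff, and_imp]
  rintro rfl rfl
  exact absurd rfl hab

theorem kron_eii_one {dE dP : ℕ} (i : Fin dE) :
    kron (Eii i) (1 : Matrix (Fin dP) (Fin dP) ℂ) =
      diagonal fun a => if a.1 = i then 1 else 0 := by
  ext a b
  simp only [kron, Eii, single_apply, one_apply, diagonal_apply, of_apply, Prod.ext_iff]
  split_ifs <;> grind

theorem dephE_eq_envDephase {dE dP : ℕ} (ρ : Matrix (Fin dE × Fin dP) (Fin dE × Fin dP) ℂ) :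
    DephE ρ = envDephase ρ := by
  ext a b
  simp [DephE, kron_eii_one, Matrix.sum_apply]

theorem trE_envDephase {dE dP : ℕ} (ρ : Matrix (Fin dE × Fin dP) (Fin dE × Fin dP) ℂ) :
    TrE (envDephase ρ) = TrE ρ := by
  simp [TrE]

section
-- Any norm will do: this one induces the product topology in which `expApply` is summed.
attribute [local instance] Matrix.normedAddCommGroup Matrix.normedSpace

theorem expApply_dephE {dE dP : ℕ}
    {L : Module.End ℂ (Matrix (Fin dE × Fin dP) (Fin dE × Fin dP) ℂ)}
    (h : Commute L envDephase)
    (ρ : Matrix (Fin dE × Fin dP) (Fin dE × Fin dP) ℂ) :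
    expApply L (DephE ρ) = DephE (expApply L ρ) := by
  rw [dephE_eq_envDephase, dephE_eq_envDephase]
  exact L.tsum_expSeries_apply_map_of_commute h ρ

end

theorem stmt11_general (dE dP : ℕ) (h : Fin dE → ℝ)
    (Hp : Fin dE → Matrix (Fin dP) (Fin dP) ℂ)
    (r : ℕ) (Mk : Fin r → Fin dE → Matrix (Fin dP) (Fin dP) ℂ)
    (G : Matrix (Fin dP) (Fin dP) ℂ) (ω : ℝ)
    (HE : Matrix (Fin dE) (Fin dE) ℂ) (hHE : HE = Matrix.diagonal fun i => (h i : ℂ))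
    (HEP : Matrix (Fin dE × Fin dP) (Fin dE × Fin dP) ℂ)
    (hHEP : HEP = ∑ i, kron (Eii i) (Hp i))
    (Lop : Fin r → Matrix (Fin dE × Fin dP) (Fin dE × Fin dP) ℂ)
    (hLop : ∀ k, Lop k = ∑ i, kron (Eii i) (Mk k i))
    (ℒ : Module.End ℂ (Matrix (Fin dE × Fin dP) (Fin dE × Fin dP) ℂ))
    (hℒ : ∀ ρ, ℒ ρ =
      -(Complex.I) • ((HEP + (ω : ℂ) • kron (1 : Matrix (Fin dE) (Fin dE) ℂ) G
            + (ω : ℂ) • kron HE (1 : Matrix (Fin dP) (Fin dP) ℂ)) * ρ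
          - ρ * (HEP + (ω : ℂ) • kron (1 : Matrix (Fin dE) (Fin dE) ℂ) G
            + (ω : ℂ) • kron HE (1 : Matrix (Fin dP) (Fin dP) ℂ)))
        + ∑ k, (Lop k * ρ * (Lop k)ᴴ
            - ((1 : ℂ)/2) • ((Lop k)ᴴ * Lop k * ρ + ρ * ((Lop k)ᴴ * Lop k)))) :
    (∀ ρ, ℒ (DephE ρ) = DephE (ℒ ρ)) ∧
    (∀ (t : ℝ) (ρ : Matrix (Fin dE × Fin dP) (Fin dE × Fin dP) ℂ),
      TrE (expApply ((t : ℂ) • ℒ) ρ) = TrE (expApply ((t : ℂ) • ℒ) (DephE ρ))) := by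
  have hH : HEP + (ω : ℂ) • kron (1 : Matrix (Fin dE) (Fin dE) ℂ) G
      + (ω : ℂ) • kron HE (1 : Matrix (Fin dP) (Fin dP) ℂ) ∈ envDiagonalSubalgebra := by
    subst hHEP hHE
    refine add_mem (add_mem (sum_mem fun i _ => ?_) (SMulMemClass.smul_mem _ ?_))
      (SMulMemClass.smul_mem _ ?_) <;> apply kron_mem_envDiagonalSubalgebra
    exacts [isDiag_eii i, isDiag_one, isDiag_diagonal _]
  have hL : ∀ k, Lop k ∈ envDiagonalSubalgebra := fun k => by
    rw [hLop]
    exact sum_mem fun i _ => kron_mem_envDiagonalSubalgebra (isDiag_eii i) _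
  have hcomm : Commute ℒ envDephase := LinearMap.ext fun ρ => by
    simp only [Module.End.mul_apply, hℒ]
    exact lindbladian_envDephase hH hL ρ
  refine ⟨fun ρ => ?_, fun t ρ => ?_⟩
  · simpa only [dephE_eq_envDephase, Module.End.mul_apply] using LinearMap.congr_fun hcomm ρ
  · rw [expApply_dephE (hcomm.smul_left _), dephE_eq_envDephase, trE_envDephase]

/-- For an HMM with diagonal interactions, the Lindbladian `ℒ` commutes
with the environment dephasing map `D_E`, and consequently
`Tr_E(exp(tℒ)(ρ)) = Tr_E(exp(tℒ)(D_E(ρ)))` for all `t` and all `ρ`. -/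
theorem stmt11 (dE dP : ℕ) (h : Fin dE → ℝ)
    (Hp : Fin dE → Matrix (Fin dP) (Fin dP) ℂ) (hHp : ∀ i, (Hp i).IsHermitian)
    (r : ℕ) (Mk : Fin r → Fin dE → Matrix (Fin dP) (Fin dP) ℂ)
    (G : Matrix (Fin dP) (Fin dP) ℂ) (hG : G.IsHermitian) (ω : ℝ)
    (HE : Matrix (Fin dE) (Fin dE) ℂ) (hHE : HE = Matrix.diagonal fun i => (h i : ℂ))
    (HEP : Matrix (Fin dE × Fin dP) (Fin dE × Fin dP) ℂ)
    (hHEP : HEP = ∑ i, kron (Eii i) (Hp i))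
    (Lop : Fin r → Matrix (Fin dE × Fin dP) (Fin dE × Fin dP) ℂ)
    (hLop : ∀ k, Lop k = ∑ i, kron (Eii i) (Mk k i))
    (ℒ : Module.End ℂ (Matrix (Fin dE × Fin dP) (Fin dE × Fin dP) ℂ))
    (hℒ : ∀ ρ, ℒ ρ =
      -(Complex.I) • ((HEP + (ω : ℂ) • kron (1 : Matrix (Fin dE) (Fin dE) ℂ) G
            + (ω : ℂ) • kron HE (1 : Matrix (Fin dP) (Fin dP) ℂ)) * ρ
          - ρ * (HEP + (ω : ℂ) • kron (1 : Matrix (Fin dE) (Fin dE) ℂ) G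
            + (ω : ℂ) • kron HE (1 : Matrix (Fin dP) (Fin dP) ℂ)))
        + ∑ k, (Lop k * ρ * (Lop k)ᴴ
            - ((1 : ℂ)/2) • ((Lop k)ᴴ * Lop k * ρ + ρ * ((Lop k)ᴴ * Lop k)))) :
    (∀ ρ, ℒ (DephE ρ) = DephE (ℒ ρ)) ∧
    (∀ (t : ℝ) (ρ : Matrix (Fin dE × Fin dP) (Fin dE × Fin dP) ℂ),
      TrE (expApply ((t : ℂ) • ℒ) ρ) = TrE (expApply ((t : ℂ) • ℒ) (DephE ρ))) :=
  stmt11_general dE dP h Hp r Mk G ω HE hHE HEP hHEP Lop hLop ℒ hℒ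
end

section
/- Let p_i and p_* be real numbers with 0 < p_i < p_* < 1. Then log((1 − p_i)/(1 − p_*)) / log((p_*·(1 − p_i))/(p_i·(1 − p_*))) < p_*, where the denominator log((p_*·(1 − p_i))/(p_i·(1 − p_*))) is strictly positive. -/
/-! Write `L₁ = log((1 - p_i)/(1 - p_*))` and `L₂ = log(p_*/p_i)`, both positive; the
denominator is `L₁ + L₂`, so the claim is `(1 - p_*) L₁ < p_* L₂`. The tangent-line bound
`x log(y/x) < y - x` (from `log t < t - 1`) gives `(1 - p_*) L₁ < p_* - p_i` and
`p_* - p_i < p_* L₂`. -/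

open Real

lemma Real.mul_log_div_lt_sub {x y : ℝ} (hx : 0 < x) (hy : 0 < y) (hxy : x ≠ y) :
    x * log (y / x) < y - x := by
  have h := log_lt_sub_one_of_pos (div_pos hy hx)
    (by rwa [ne_eq, div_eq_one_iff_eq hx.ne', eq_comm])
  calc x * log (y / x) < x * (y / x - 1) := mul_lt_mul_of_pos_left h hx
    _ = y - x := by field_simp

/-- For `0 < p_i < p_* < 1`, the threshold fraction
`log((1−p_i)/(1−p_*)) / log((p_*(1−p_i))/(p_i(1−p_*)))` is strictly below `p_*`,
and the denominator is strictly positive. -/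
theorem stmt14 (pi pstar : ℝ) (h0 : 0 < pi) (h1 : pi < pstar) (h2 : pstar < 1) :
    0 < Real.log ((pstar * (1 - pi)) / (pi * (1 - pstar))) ∧
    Real.log ((1 - pi) / (1 - pstar))
        / Real.log ((pstar * (1 - pi)) / (pi * (1 - pstar))) < pstar := by
  have hps : 0 < pstar := h0.trans h1
  have h1pi : 0 < 1 - pi := by linarith
  have h1ps : 0 < 1 - pstar := by linarith
  have hL₁ : 0 < log ((1 - pi) / (1 - pstar)) := log_pos ((one_lt_div h1ps).2 (by linarith))
  have hL₂ : 0 < log (pstar / pi) := log_pos ((one_lt_div h0).2 h1)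
  have hsplit : log ((pstar * (1 - pi)) / (pi * (1 - pstar)))
      = log (pstar / pi) + log ((1 - pi) / (1 - pstar)) := by
    rw [mul_div_mul_comm, log_mul (by positivity) (by positivity)]
  have hk₁ := mul_log_div_lt_sub h1ps h1pi (by linarith)
  have hk₂ := mul_log_div_lt_sub hps h0 h1.ne'
  rw [← inv_div, log_inv] at hk₂
  rw [hsplit, div_lt_iff₀ (add_pos hL₂ hL₁)]
  exact ⟨add_pos hL₂ hL₁, by linarith⟩
end

section
/- Let p_i, p_* be reals with 0 < p_i < p_* < 1, let α_i, α_* > 0 be reals, let d_i, d_* be reals with d_* ≠ 0, and let η > 0, ε > 0. Then there exists N₁ ∈ ℕ such that for all natural numbers N > N₁ and all natural numbers n₁ ≤ N satisfying n₁/N > log((1 − p_i)/(1 − p_*))/log((p_*·(1 − p_i))/(p_i·(1 − p_*))) + ε and |n₁ − N·p_*| ≥ 1, one has |α_*·d_*·p_*^{n₁}·(1 − p_*)^{N − n₁}·(n₁ − N·p_*)/(p_*·(1 − p_*))| > η·|α_i·d_i·p_i^{n₁}·(1 − p_i)^{N − n₁}·(n₁ − N·p_i)/(p_i·(1 − p_i))|.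 -/
lemma stmt15_aux_exp (k c x : ℝ) (hk : 0 ≤ k) (hc : 0 < c) (hx1 : 1 ≤ x)
    (hgt : 4 * (k + 1) / c ^ 2 < x) : k * x < Real.exp (c * x) := by
  have hx : 0 < x := lt_of_lt_of_le one_pos hx1
  have hq : (c * x) ^ 2 / 4 ≤ Real.exp (c * x) := by
    have h := Real.add_one_le_exp (c * x / 2)
    have h2 : Real.exp (c * x) = Real.exp (c * x / 2) * Real.exp (c * x / 2) := by
      rw [← Real.exp_add]; ring_nf
    nlinarith [Real.exp_pos (c * x / 2), mul_pos hc hx]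
  have h2 : 4 * (k + 1) < x * c ^ 2 := by
    rwa [div_lt_iff₀ (by positivity)] at hgt
  nlinarith [mul_lt_mul_of_pos_right h2 hx]

lemma stmt15_aux_final (η c1 c2 p e d1 d2 x : ℝ) (hη : 0 < η) (hc1 : 0 < c1)
    (hc2 : 0 ≤ c2) (hp : 0 < p) (he : 0 < e) (hd1 : 1 ≤ d1) (hd2 : 0 ≤ d2)
    (hd2x : d2 ≤ x) (hex : η * c2 / c1 * x < e) :
    η * (c2 * p * d2) < c1 * (p * e) * d1 := by
  have h1 : η * (c2 * p * d2) ≤ η * (c2 * p * x) := by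
    nlinarith [mul_nonneg (mul_nonneg hη.le (mul_nonneg hc2 hp.le)) (sub_nonneg.mpr hd2x)]
  have h2 : c1 * p * (η * c2 / c1 * x) = η * (c2 * p * x) := by
    field_simp
  have h3 : c1 * p * (η * c2 / c1 * x) < c1 * p * e :=
    mul_lt_mul_of_pos_left hex (by positivity)
  have h4 : c1 * p * e ≤ c1 * p * e * d1 :=
    le_mul_of_one_le_right (by positivity) hd1
  nlinarith

/-- Lemma: domination of the `p_*` term including derivative factors.
For `0 < p_i < p_* < 1`, positive weights, `d_* ≠ 0` and any `η, ε > 0`, there is `N₁` such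
that for all `N > N₁` and all `n₁ ≤ N` whose fraction exceeds the threshold by `ε` and with
`|n₁ − N·p_*| ≥ 1`, the `p_*` term dominates the `p_i` term by a factor `η`. -/
theorem stmt15 (pi pstar : ℝ) (h0 : 0 < pi) (h1 : pi < pstar) (h2 : pstar < 1)
    (αi αstar : ℝ) (hαi : 0 < αi) (hαstar : 0 < αstar)
    (di dstar : ℝ) (hdstar : dstar ≠ 0)
    (η ε : ℝ) (hη : 0 < η) (hε : 0 < ε) :
    ∃ N₁ : ℕ, ∀ N : ℕ, N₁ < N → ∀ n₁ : ℕ, n₁ ≤ N →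
      (n₁ : ℝ) / N > Real.log ((1 - pi) / (1 - pstar))
          / Real.log ((pstar * (1 - pi)) / (pi * (1 - pstar))) + ε →
      |(n₁ : ℝ) - N * pstar| ≥ 1 →
      |αstar * dstar * pstar ^ n₁ * (1 - pstar) ^ (N - n₁)
          * ((n₁ : ℝ) - N * pstar) / (pstar * (1 - pstar))|
        > η * |αi * di * pi ^ n₁ * (1 - pi) ^ (N - n₁)
          * ((n₁ : ℝ) - N * pi) / (pi * (1 - pi))| := by
  have hps : 0 < pstar := h0.trans h1
  have hpi1 : pi < 1 := h1.trans h2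
  have h1pi : 0 < 1 - pi := by linarith
  have h1ps : 0 < 1 - pstar := by linarith
  set L := Real.log ((1 - pi) / (1 - pstar)) with hLdef
  set R := Real.log ((pstar * (1 - pi)) / (pi * (1 - pstar))) with hRdef
  have hRpos : 0 < R := by
    apply Real.log_pos
    rw [lt_div_iff₀ (by positivity)]
    nlinarith
  set C1 := αstar * |dstar| / (pstar * (1 - pstar)) with hC1def
  set C2 := αi * |di| / (pi * (1 - pi)) with hC2def
  have hds : 0 < |dstar| := abs_pos.mpr hdstar
  have hC1 : 0 < C1 := by rw [hC1def]; positivity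
  have hC2 : 0 ≤ C2 := by rw [hC2def]; positivity
  set K := η * C2 / C1 with hKdef
  have hK : 0 ≤ K := by rw [hKdef]; positivity
  set c := ε * R with hcdef
  have hc : 0 < c := mul_pos hε hRpos
  refine ⟨Nat.ceil (4 * (K + 1) / c ^ 2), ?_⟩
  intro N hN n₁ hn₁ hfrac habs
  have hN1 : 0 < N := lt_of_le_of_lt (Nat.zero_le _) hN
  have hNR : (0 : ℝ) < N := by exact_mod_cast hN1
  have hN1R : (1 : ℝ) ≤ N := by exact_mod_cast hN1
  have hn₁R : (n₁ : ℝ) ≤ N := by exact_mod_cast hn₁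
  have hn₁0 : (0 : ℝ) ≤ n₁ := Nat.cast_nonneg n₁
  -- superlinear growth of the exponential
  have hNgt : 4 * (K + 1) / c ^ 2 < (N : ℝ) :=
    lt_of_le_of_lt (Nat.le_ceil _) (by exact_mod_cast hN)
  have hKN : K * N < Real.exp (c * N) := stmt15_aux_exp K c N hK hc hN1R hNgt
  -- exponential representations
  have e_ps : pstar ^ n₁ = Real.exp ((n₁ : ℝ) * Real.log pstar) := by
    rw [← Real.log_pow, Real.exp_log (pow_pos hps n₁)]
  have e_1ps : (1 - pstar) ^ (N - n₁)
      = Real.exp (((N - n₁ : ℕ) : ℝ) * Real.log (1 - pstar)) := by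
    rw [← Real.log_pow, Real.exp_log (pow_pos h1ps _)]
  have e_pi : pi ^ n₁ = Real.exp ((n₁ : ℝ) * Real.log pi) := by
    rw [← Real.log_pow, Real.exp_log (pow_pos h0 n₁)]
  have e_1pi : (1 - pi) ^ (N - n₁)
      = Real.exp (((N - n₁ : ℕ) : ℝ) * Real.log (1 - pi)) := by
    rw [← Real.log_pow, Real.exp_log (pow_pos h1pi _)]
  have hmcast : ((N - n₁ : ℕ) : ℝ) = (N : ℝ) - n₁ := by
    push_cast [Nat.cast_sub hn₁]; ring
  have key : pstar ^ n₁ * (1 - pstar) ^ (N - n₁)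
      = pi ^ n₁ * (1 - pi) ^ (N - n₁) * Real.exp ((n₁ : ℝ) * R - N * L) := by
    rw [e_ps, e_1ps, e_pi, e_1pi, ← Real.exp_add, ← Real.exp_add, ← Real.exp_add]
    congr 1
    have hR' : R = Real.log pstar + Real.log (1 - pi)
        - (Real.log pi + Real.log (1 - pstar)) := by
      rw [hRdef, Real.log_div (by positivity) (by positivity),
        Real.log_mul (ne_of_gt hps) (ne_of_gt h1pi),
        Real.log_mul (ne_of_gt h0) (ne_of_gt h1ps)]
    have hL' : L = Real.log (1 - pi) - Real.log (1 - pstar) := by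
      rw [hLdef, Real.log_div (ne_of_gt h1pi) (ne_of_gt h1ps)]
    rw [hmcast, hR', hL']; ring
  -- the fraction hypothesis
  have hn1R : (n₁ : ℝ) * R - N * L > c * N := by
    have h3 : (L / R + ε) * N < n₁ := by
      rw [← lt_div_iff₀ hNR]; exact hfrac
    have h4 : L / R * R = L := div_mul_cancel₀ L (ne_of_gt hRpos)
    have h5 : (L / R + ε) * N * R < (n₁ : ℝ) * R := mul_lt_mul_of_pos_right h3 hRpos
    have h6 : (L / R + ε) * N * R = L * N + ε * R * N := by
      calc (L / R + ε) * N * R = (L / R * R) * N + ε * R * N := by ring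
        _ = L * N + ε * R * N := by rw [h4]
    rw [hcdef]
    linarith
  -- rewrite both absolute values
  have hA : |αstar * dstar * pstar ^ n₁ * (1 - pstar) ^ (N - n₁)
      * ((n₁ : ℝ) - N * pstar) / (pstar * (1 - pstar))|
      = C1 * (pstar ^ n₁ * (1 - pstar) ^ (N - n₁)) * |(n₁ : ℝ) - N * pstar| := by
    rw [abs_div, abs_mul, abs_mul, abs_mul, abs_mul, abs_of_pos hαstar,
      abs_of_pos (pow_pos hps n₁), abs_of_pos (pow_pos h1ps _),
      abs_of_pos (mul_pos hps h1ps), hC1def]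
    ring
  have hB : |αi * di * pi ^ n₁ * (1 - pi) ^ (N - n₁)
      * ((n₁ : ℝ) - N * pi) / (pi * (1 - pi))|
      = C2 * (pi ^ n₁ * (1 - pi) ^ (N - n₁)) * |(n₁ : ℝ) - N * pi| := by
    rw [abs_div, abs_mul, abs_mul, abs_mul, abs_mul, abs_of_pos hαi,
      abs_of_pos (pow_pos h0 n₁), abs_of_pos (pow_pos h1pi _),
      abs_of_pos (mul_pos h0 h1pi), hC2def]
    ring
  rw [hA, hB, key]
  set P := pi ^ n₁ * (1 - pi) ^ (N - n₁) with hPdef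
  have hP : 0 < P := by rw [hPdef]; positivity
  set E := Real.exp ((n₁ : ℝ) * R - N * L) with hEdef
  have hE0 : 0 < E := Real.exp_pos _
  set D1 := |(n₁ : ℝ) - N * pstar| with hD1def
  set D2 := |(n₁ : ℝ) - N * pi| with hD2def
  have hpiN : (N : ℝ) * pi ≤ N := mul_le_of_le_one_right hNR.le hpi1.le
  have hpiN0 : 0 ≤ (N : ℝ) * pi := by positivity
  have hD2 : D2 ≤ N := by
    rw [hD2def, abs_le]
    constructor
    · linarith
    · linarith
  have hD2' : 0 ≤ D2 := abs_nonneg _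
  have hEK : K * N < E := by
    refine lt_trans hKN ?_
    rw [hEdef]
    exact Real.exp_lt_exp.mpr hn1R
  exact stmt15_aux_final η C1 C2 P E D1 D2 N hη hC1 hC2 hP hE0 habs hD2' hD2
    (by rw [← hKdef]; exact hEK)
end

section
/- Let p ∈ (0,1), let η ∈ (0,1), and let ε ∈ (0,p). Then there exists N₁ ∈ ℕ such that for every natural number N > N₁ and every natural number n₀ with n₀ ≤ (p − ε)·N, one has Σ_{n = n₀+1}^{N} C(N,n)·p^n·(1 − p)^{N − n}·((n − N·p)/(p·(1 − p)))² > η · Σ_{n = 0}^{N} C(N,n)·p^n·(1 − p)^{N − n}·((n − N·p)/(p·(1 − p)))². -/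
/-!
Write `w n = C(N,n) pⁿ (1-p)^(N-n)` and `q = p(1-p)`. The factorial moments of the binomial
distribution are `∑ w n · n(n-1)⋯(n-j+1) = N(N-1)⋯(N-j+1) pʲ`, which give the central moments
`∑ w n (n - Np)² = Nq` and `∑ w n (n - Np)⁴ = Nq(1 - 6q) + 3N²q² ≤ 4N²q`. The full sum is
therefore `N/q`, growing linearly in `N`. On the head `n ≤ n₀ ≤ (p - ε)N` one has
`(n - Np)² ≥ ε²N²`, so the head contributes at most `∑ w n (n - Np)⁴ / (ε²N² q²) ≤ 4/(ε² q)`,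
which is bounded; for `N > 4/(ε²(1 - η))` it is below `(1 - η)` times the full sum.
-/

open Finset

theorem Nat.choose_add_mul_descFactorial (N j m : ℕ) :
    N.choose (j + m) * (j + m).descFactorial j = N.descFactorial j * (N - j).choose m := by
  rw [Nat.descFactorial_eq_factorial_mul_choose, Nat.descFactorial_eq_factorial_mul_choose,
    mul_left_comm, Nat.choose_mul (Nat.le_add_right j m), Nat.add_sub_cancel_left]
  ring

theorem Nat.cast_descFactorial_succ {R : Type*} [Ring R] (n k : ℕ) :
    (n.descFactorial (k + 1) : R) = (n - k) * n.descFactorial k := by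
  rcases le_or_gt k n with h | h
  · rw [Nat.descFactorial_succ, Nat.cast_mul, Nat.cast_sub h]
  · rw [Nat.descFactorial_eq_zero_iff_lt.2 h, Nat.descFactorial_eq_zero_iff_lt.2 (by omega)]
    simp

theorem sum_choose_mul_pow_mul_pow_mul_descFactorial {R : Type*} [CommSemiring R]
    (x y : R) (N j : ℕ) :
    ∑ n ∈ range (N + 1), (N.choose n : R) * x ^ n * y ^ (N - n) * n.descFactorial j
      = N.descFactorial j * x ^ j * (x + y) ^ (N - j) := by
  rcases lt_or_ge N j with hN | hj
  · rw [Nat.descFactorial_eq_zero_iff_lt.2 hN]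
    refine (sum_eq_zero fun n hn => ?_).trans (by simp)
    rw [Nat.descFactorial_eq_zero_iff_lt.2 (by rw [mem_range] at hn; omega)]
    simp
  have hlow : ∀ n ∈ range (N + 1), n ∉ Ico j (N + 1) →
      (N.choose n : R) * x ^ n * y ^ (N - n) * n.descFactorial j = 0 := by
    intro n hn hn'
    rw [Nat.descFactorial_eq_zero_iff_lt.2 (by simp_all), Nat.cast_zero, mul_zero]
  rw [← sum_subset (fun n hn => by simp_all) hlow, sum_Ico_eq_sum_range,
    show N + 1 - j = N - j + 1 by omega, add_pow, mul_sum]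
  refine sum_congr rfl fun m _ => ?_
  have hchoose := congrArg (Nat.cast (R := R)) (Nat.choose_add_mul_descFactorial N j m)
  push_cast at hchoose
  rw [Nat.sub_add_eq, pow_add]
  calc _ = ((N.choose (j + m) : R) * (j + m).descFactorial j)
        * (x ^ j * x ^ m * y ^ (N - j - m)) := by ring
    _ = _ := by rw [hchoose]; ring

def binomialWeight (p : ℝ) (N n : ℕ) : ℝ := N.choose n * p ^ n * (1 - p) ^ (N - n)

section binomialWeight

variable {p : ℝ} {N : ℕ}

theorem binomialWeight_nonneg (hp0 : 0 ≤ p) (hp1 : p ≤ 1) (n : ℕ) :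
    0 ≤ binomialWeight p N n := by
  unfold binomialWeight
  have : 0 ≤ 1 - p := by linarith
  positivity

theorem sum_binomialWeight_mul_descFactorial (p : ℝ) (N j : ℕ) :
    ∑ n ∈ range (N + 1), binomialWeight p N n * n.descFactorial j
      = N.descFactorial j * p ^ j := by
  have h := sum_choose_mul_pow_mul_pow_mul_descFactorial p (1 - p) N j
  rwa [add_sub_cancel, one_pow, mul_one] at h

theorem sum_binomialWeight_mul_sub_sq (p : ℝ) (N : ℕ) :
    ∑ n ∈ range (N + 1), binomialWeight p N n * ((n : ℝ) - N * p) ^ 2 = N * p * (1 - p) := by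
  have hexpand : ∀ n : ℕ, binomialWeight p N n * ((n : ℝ) - N * p) ^ 2
      = binomialWeight p N n * n.descFactorial 2
        + (1 - 2 * N * p) * (binomialWeight p N n * n.descFactorial 1)
        + (N * p) ^ 2 * (binomialWeight p N n * n.descFactorial 0) := by
    intro n
    simp only [Nat.cast_descFactorial_succ, Nat.descFactorial_zero, Nat.cast_one]
    ring
  simp only [hexpand, sum_add_distrib, ← mul_sum]
  simp only [sum_binomialWeight_mul_descFactorial]
  simp only [Nat.cast_descFactorial_succ, Nat.descFactorial_zero, Nat.cast_one]
  ring

theorem sum_binomialWeight_mul_sub_pow_four (p : ℝ) (N : ℕ) :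
    ∑ n ∈ range (N + 1), binomialWeight p N n * ((n : ℝ) - N * p) ^ 4
      = N * p * (1 - p) * (1 - 6 * p * (1 - p)) + 3 * (N * p * (1 - p)) ^ 2 := by
  have hexpand : ∀ n : ℕ, binomialWeight p N n * ((n : ℝ) - N * p) ^ 4
      = binomialWeight p N n * n.descFactorial 4
        + (6 - 4 * N * p) * (binomialWeight p N n * n.descFactorial 3)
        + (7 - 12 * N * p + 6 * (N * p) ^ 2) * (binomialWeight p N n * n.descFactorial 2)
        + (1 - 4 * N * p + 6 * (N * p) ^ 2 - 4 * (N * p) ^ 3)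
          * (binomialWeight p N n * n.descFactorial 1)
        + (N * p) ^ 4 * (binomialWeight p N n * n.descFactorial 0) := by
    intro n
    simp only [Nat.cast_descFactorial_succ, Nat.descFactorial_zero, Nat.cast_one]
    ring
  simp only [hexpand, sum_add_distrib, ← mul_sum]
  simp only [sum_binomialWeight_mul_descFactorial]
  simp only [Nat.cast_descFactorial_succ, Nat.descFactorial_zero, Nat.cast_one]
  ring

theorem sum_binomialWeight_mul_sub_pow_four_le (hp0 : 0 ≤ p) (hp1 : p ≤ 1) :
    ∑ n ∈ range (N + 1), binomialWeight p N n * ((n : ℝ) - N * p) ^ 4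
      ≤ 4 * N ^ 2 * (p * (1 - p)) := by
  have hq : 0 ≤ p * (1 - p) := mul_nonneg hp0 (by linarith)
  have hq1 : p * (1 - p) ≤ 1 := by nlinarith
  have hN : (N : ℝ) ≤ N ^ 2 := by
    norm_cast
    nlinarith
  rw [sum_binomialWeight_mul_sub_pow_four]
  nlinarith [mul_le_mul_of_nonneg_right hN hq, mul_nonneg (mul_nonneg (sq_nonneg (N : ℝ)) hq) hq,
    mul_nonneg (Nat.cast_nonneg N : (0 : ℝ) ≤ N) (mul_nonneg hq hq)]

theorem sq_mul_sum_range_binomialWeight_mul_sub_sq_le (hp0 : 0 ≤ p) (hp1 : p ≤ 1) {ε : ℝ}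
    (hε : 0 ≤ ε) {n₀ : ℕ} (hn₀ : (n₀ : ℝ) ≤ (p - ε) * N) :
    (ε * N) ^ 2 * ∑ n ∈ range (n₀ + 1), binomialWeight p N n * ((n : ℝ) - N * p) ^ 2
      ≤ 4 * N ^ 2 * (p * (1 - p)) := by
  have hn₀N : n₀ ≤ N := by
    have : (n₀ : ℝ) ≤ N := hn₀.trans (by nlinarith [(Nat.cast_nonneg N : (0 : ℝ) ≤ N)])
    exact_mod_cast this
  have hdev : ∀ n ∈ range (n₀ + 1), (ε * N) ^ 2 ≤ ((n : ℝ) - N * p) ^ 2 := by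
    intro n hn
    have hn : (n : ℝ) ≤ n₀ := by rw [mem_range] at hn; exact_mod_cast Nat.lt_succ_iff.mp hn
    have hgap : ε * N ≤ N * p - n := by linarith
    calc (ε * N) ^ 2 ≤ (N * p - n) ^ 2 := pow_le_pow_left₀ (by positivity) hgap 2
      _ = ((n : ℝ) - N * p) ^ 2 := by ring
  calc (ε * N) ^ 2 * ∑ n ∈ range (n₀ + 1), binomialWeight p N n * ((n : ℝ) - N * p) ^ 2
      ≤ ∑ n ∈ range (n₀ + 1), binomialWeight p N n * ((n : ℝ) - N * p) ^ 4 := by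
        rw [mul_sum]
        refine sum_le_sum fun n hn => ?_
        have hw := binomialWeight_nonneg (N := N) hp0 hp1 n
        calc (ε * N) ^ 2 * (binomialWeight p N n * ((n : ℝ) - N * p) ^ 2)
            = binomialWeight p N n * ((ε * N) ^ 2 * ((n : ℝ) - N * p) ^ 2) := by ring
          _ ≤ binomialWeight p N n * (((n : ℝ) - N * p) ^ 2 * ((n : ℝ) - N * p) ^ 2) := by
            exact mul_le_mul_of_nonneg_left
              (mul_le_mul_of_nonneg_right (hdev n hn) (sq_nonneg _)) hw
          _ = binomialWeight p N n * ((n : ℝ) - N * p) ^ 4 := by ring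
    _ ≤ ∑ n ∈ range (N + 1), binomialWeight p N n * ((n : ℝ) - N * p) ^ 4 :=
        sum_le_sum_of_subset_of_nonneg (range_subset_range.2 (by omega))
          fun n _ _ => mul_nonneg (binomialWeight_nonneg hp0 hp1 n) (by positivity)
    _ ≤ 4 * N ^ 2 * (p * (1 - p)) := sum_binomialWeight_mul_sub_pow_four_le hp0 hp1

end binomialWeight

theorem exists_mul_sum_lt_sum_Ioc_binomialWeight_mul_sub_sq {p η ε : ℝ} (hp0 : 0 < p)
    (hp1 : p < 1) (hη1 : η < 1) (hε0 : 0 < ε) :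
    ∃ N₁ : ℕ, ∀ N : ℕ, N₁ < N → ∀ n₀ : ℕ, (n₀ : ℝ) ≤ (p - ε) * N →
      η * ∑ n ∈ range (N + 1), binomialWeight p N n * ((n : ℝ) - N * p) ^ 2
        < ∑ n ∈ Ioc n₀ N, binomialWeight p N n * ((n : ℝ) - N * p) ^ 2 := by
  refine ⟨⌈4 / (ε ^ 2 * (1 - η))⌉₊, fun N hN n₀ hn₀ => ?_⟩
  have hNlarge : 4 < (1 - η) * ε ^ 2 * N := by
    have hη : 0 < 1 - η := by linarith
    have := (div_lt_iff₀ (by positivity)).1 (Nat.lt_of_ceil_lt hN)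
    linarith
  have hN0 : (0 : ℝ) < N := Nat.cast_pos.2 (Nat.zero_lt_of_lt hN)
  have hn₀N : n₀ ≤ N := by
    have : (n₀ : ℝ) ≤ N := hn₀.trans (by nlinarith)
    exact_mod_cast this
  have hsplit := sum_range_add_sum_Ico (fun n => binomialWeight p N n * ((n : ℝ) - N * p) ^ 2)
    (by omega : n₀ + 1 ≤ N + 1)
  rw [Ico_add_one_add_one_eq_Ioc, sum_binomialWeight_mul_sub_sq] at hsplit
  rw [sum_binomialWeight_mul_sub_sq]
  set H := ∑ n ∈ range (n₀ + 1), binomialWeight p N n * ((n : ℝ) - N * p) ^ 2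
  have hpq : 0 < p * (1 - p) := mul_pos hp0 (by linarith)
  have hhead : ε ^ 2 * H ≤ 4 * (p * (1 - p)) := by
    refine le_of_mul_le_mul_left ?_ (by positivity : (0 : ℝ) < N ^ 2)
    linear_combination sq_mul_sum_range_binomialWeight_mul_sub_sq_le hp0.le hp1.le hε0.le hn₀
  have hhead_small : H < (1 - η) * (N * p * (1 - p)) := by
    refine lt_of_mul_lt_mul_left ?_ (by positivity : (0 : ℝ) ≤ ε ^ 2)
    nlinarith
  linarith

theorem stmt17_general (p η ε : ℝ) (hp0 : 0 < p) (hp1 : p < 1)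
    (hη1 : η < 1) (hε0 : 0 < ε) :
    ∃ N₁ : ℕ, ∀ N : ℕ, N₁ < N → ∀ n₀ : ℕ, (n₀ : ℝ) ≤ (p - ε) * N →
      ∑ n ∈ Finset.Ioc n₀ N,
          (N.choose n : ℝ) * p ^ n * (1 - p) ^ (N - n)
            * (((n : ℝ) - N * p) / (p * (1 - p))) ^ 2
        > η * ∑ n ∈ Finset.range (N + 1),
          (N.choose n : ℝ) * p ^ n * (1 - p) ^ (N - n)
            * (((n : ℝ) - N * p) / (p * (1 - p))) ^ 2 := by
  obtain ⟨N₁, hN₁⟩ := exists_mul_sum_lt_sum_Ioc_binomialWeight_mul_sub_sq hp0 hp1 hη1 hε0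
  refine ⟨N₁, fun N hN n₀ hn₀ => ?_⟩
  have hq : 0 < (p * (1 - p)) ^ 2 := by
    have : 0 < 1 - p := by linarith
    positivity
  simp_rw [div_pow, ← mul_div_assoc, ← sum_div]
  rw [gt_iff_lt, ← mul_div_assoc, div_lt_div_iff_of_pos_right hq]
  exact hN₁ N hN n₀ hn₀

/-- Lemma: the tail of the binomial Fisher-information sum dominates.
For `p ∈ (0,1)`, `η ∈ (0,1)` and `ε ∈ (0,p)`, there is `N₁` such that for every `N > N₁`
and every `n₀ ≤ (p−ε)N`, the partial sum over `n = n₀+1,…,N` of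
`C(N,n)p^n(1−p)^{N−n}((n−Np)/(p(1−p)))²` exceeds `η` times the full sum. -/
theorem stmt17 (p η ε : ℝ) (hp0 : 0 < p) (hp1 : p < 1)
    (hη0 : 0 < η) (hη1 : η < 1) (hε0 : 0 < ε) (hεp : ε < p) :
    ∃ N₁ : ℕ, ∀ N : ℕ, N₁ < N → ∀ n₀ : ℕ, (n₀ : ℝ) ≤ (p - ε) * N →
      ∑ n ∈ Finset.Ioc n₀ N,
          (N.choose n : ℝ) * p ^ n * (1 - p) ^ (N - n)
            * (((n : ℝ) - N * p) / (p * (1 - p))) ^ 2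
        > η * ∑ n ∈ Finset.range (N + 1),
          (N.choose n : ℝ) * p ^ n * (1 - p) ^ (N - n)
            * (((n : ℝ) - N * p) / (p * (1 - p))) ^ 2 :=
  stmt17_general p η ε hp0 hp1 hη1 hε0
end

section
/- Let d ≥ 1, let p : Fin d → ℝ satisfy 0 < p_i < 1 for all i with the values p_i pairwise distinct, let α : Fin d → ℝ be nonnegative with Σ_i α_i = 1, and let D : Fin d → ℝ. Let i* be an index at which p attains its maximum over {i : α_i > 0}, and assume α_{i*} > 0 and D_{i*} ≠ 0. For N ∈ ℕ define the Fisher information of the binomial mixture I(N) = Σ_{n=0}^{N} C(N,n) · (Σ_i α_i·D_i·p_i^n·(1 − p_i)^{N − n}·(n − N·p_i)/(p_i·(1 − p_i)))² / (Σ_i α_i·p_i^n·(1 − p_i)^{N − n}). Then there exist a constant c > 0 and N₀ ∈ ℕ such that I(N) ≥ c·N for all N ≥ N₀. -/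
open scoped BigOperators
open Finset Filter Topology

private lemma sum_binom_aux (x y : ℝ) (N : ℕ) :
    ∑ n ∈ range (N+1), (N.choose n : ℝ) * x^n * y^(N-n) = (x+y)^N := by
  rw [add_pow]
  exact sum_congr rfl fun n _ => by ring

private lemma sum_binom_mul_aux (x y : ℝ) (N : ℕ) :
    ∑ n ∈ range (N+1), (n:ℝ) * ((N.choose n : ℝ) * x^n * y^(N-n))
      = N * x * (x+y)^(N-1) := by
  cases N with
  | zero => simp
  | succ m =>
    rw [Finset.sum_range_succ']
    have h1 : ∀ k ∈ range (m+1),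
        ((k+1:ℕ):ℝ) * (((m+1).choose (k+1) : ℝ) * x^(k+1) * y^(m+1-(k+1)))
        = ((m+1:ℕ):ℝ) * x * ((m.choose k : ℝ) * x^k * y^(m-k)) := by
      intro k hk
      have h2 : (((m+1).choose (k+1) : ℝ)) * ((k:ℝ)+1) = ((m:ℝ)+1) * (m.choose k : ℝ) := by
        exact_mod_cast congrArg (Nat.cast (R := ℝ)) (Nat.add_one_mul_choose_eq m k).symm
      have h3 : m + 1 - (k+1) = m - k := by omega
      rw [h3]
      push_cast
      linear_combination (x^(k+1) * y^(m-k)) * h2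
    rw [sum_congr rfl h1, ← Finset.mul_sum, sum_binom_aux]
    simp

private lemma sum_binom_mul2_aux (x y : ℝ) (N : ℕ) :
    ∑ n ∈ range (N+1), (n:ℝ) * ((n:ℝ)-1) * ((N.choose n : ℝ) * x^n * y^(N-n))
      = N * ((N:ℝ)-1) * x^2 * (x+y)^(N-2) := by
  cases N with
  | zero => simp
  | succ m =>
    rw [Finset.sum_range_succ']
    have h1 : ∀ k ∈ range (m+1),
        ((k+1:ℕ):ℝ) * (((k+1:ℕ):ℝ)-1) * (((m+1).choose (k+1) : ℝ) * x^(k+1) * y^(m+1-(k+1)))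
        = ((m+1:ℕ):ℝ) * x * ((k:ℝ) * ((m.choose k : ℝ) * x^k * y^(m-k))) := by
      intro k hk
      have h2 : (((m+1).choose (k+1) : ℝ)) * ((k:ℝ)+1) = ((m:ℝ)+1) * (m.choose k : ℝ) := by
        exact_mod_cast congrArg (Nat.cast (R := ℝ)) (Nat.add_one_mul_choose_eq m k).symm
      have h3 : m + 1 - (k+1) = m - k := by omega
      rw [h3]
      push_cast
      linear_combination ((k:ℝ) * x^(k+1) * y^(m-k)) * h2
    rw [sum_congr rfl h1, ← Finset.mul_sum, sum_binom_mul_aux]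
    cases m with
    | zero => simp
    | succ l =>
      have : l + 1 + 1 - 2 = l + 1 - 1 := by omega
      rw [this]
      push_cast
      ring

private lemma sum_binom_var_aux (x : ℝ) (N : ℕ) :
    ∑ n ∈ range (N+1), ((N.choose n : ℝ) * x^n * (1-x)^(N-n)) * ((n:ℝ) - N*x)^2
      = N * x * (1-x) := by
  have e : ∀ n ∈ range (N+1), ((N.choose n : ℝ) * x^n * (1-x)^(N-n)) * ((n:ℝ) - N*x)^2
      = (n:ℝ)*((n:ℝ)-1) * ((N.choose n : ℝ) * x^n * (1-x)^(N-n))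
        + (1 - 2*(N:ℝ)*x) * ((n:ℝ) * ((N.choose n : ℝ) * x^n * (1-x)^(N-n)))
        + ((N:ℝ)*x)^2 * ((N.choose n : ℝ) * x^n * (1-x)^(N-n)) := fun n _ => by ring
  rw [sum_congr rfl e, Finset.sum_add_distrib, Finset.sum_add_distrib,
    ← Finset.mul_sum, ← Finset.mul_sum, sum_binom_mul2_aux, sum_binom_mul_aux, sum_binom_aux]
  have hxy : x + (1-x) = 1 := by ring
  rw [hxy, one_pow, one_pow, one_pow]
  ring

private lemma sum_binom_aux' (x y : ℝ) (N : ℕ) :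
    ∑ n ∈ range (N+1), (N.choose n : ℝ) * x^n * y^(N-n) = (x+y)^N := by
  rw [add_pow]
  exact sum_congr rfl fun n _ => by ring

private lemma tail_sum_le_aux (p lam t : ℝ) (hp0 : 0 ≤ p) (hp1 : p ≤ 1) (hlam : 0 < lam)
    (N : ℕ) (S : Finset ℕ) (hS : S ⊆ range (N+1))
    (hmem : ∀ n ∈ S, (1:ℝ) ≤ lam ^ (n:ℝ) * lam ^ (-(t*N)) ) :
    ∑ n ∈ S, (N.choose n : ℝ) * p^n * (1-p)^(N-n)
      ≤ ((p*lam + (1-p)) * lam ^ (-t : ℝ)) ^ N := by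
  have hq : (0:ℝ) ≤ 1 - p := by linarith
  have key : ∀ n ∈ S, (N.choose n : ℝ) * p^n * (1-p)^(N-n)
      ≤ lam ^ (-(t*N)) * ((N.choose n : ℝ) * (p*lam)^n * (1-p)^(N-n)) := by
    intro n hn
    have h1 := hmem n hn
    have h2 : (0:ℝ) ≤ (N.choose n : ℝ) * p^n * (1-p)^(N-n) := by positivity
    calc (N.choose n : ℝ) * p^n * (1-p)^(N-n)
        = ((N.choose n : ℝ) * p^n * (1-p)^(N-n)) * 1 := by ring
      _ ≤ ((N.choose n : ℝ) * p^n * (1-p)^(N-n)) * (lam ^ (n:ℝ) * lam ^ (-(t*N))) :=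
          mul_le_mul_of_nonneg_left h1 h2
      _ = lam ^ (-(t*N)) * ((N.choose n : ℝ) * (p*lam)^n * (1-p)^(N-n)) := by
          rw [Real.rpow_natCast]
          ring
  calc ∑ n ∈ S, (N.choose n : ℝ) * p^n * (1-p)^(N-n)
      ≤ ∑ n ∈ S, lam ^ (-(t*N)) * ((N.choose n : ℝ) * (p*lam)^n * (1-p)^(N-n)) :=
        Finset.sum_le_sum key
    _ ≤ ∑ n ∈ range (N+1), lam ^ (-(t*N)) * ((N.choose n : ℝ) * (p*lam)^n * (1-p)^(N-n)) := by
        refine Finset.sum_le_sum_of_subset_of_nonneg hS fun n _ _ => ?_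
        have : (0:ℝ) ≤ p * lam := by positivity
        positivity
    _ = lam ^ (-(t*N)) * (p*lam + (1-p)) ^ N := by
        rw [← Finset.mul_sum, sum_binom_aux']
    _ = ((p*lam + (1-p)) * lam ^ (-t : ℝ)) ^ N := by
        have : lam ^ (-(t*(N:ℝ))) = (lam ^ (-t : ℝ)) ^ N := by
          rw [← Real.rpow_natCast (lam ^ (-t : ℝ)) N, ← Real.rpow_mul hlam.le]
          ring_nf
        rw [this, mul_pow]
        ring

private lemma rho_lt_one_aux (p t lam : ℝ) (hp0 : 0 < p) (hp1 : p < 1) (ht : 0 < t)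
    (hlam : 0 < lam) (hsign : (lam - 1) * (p*lam - t) < 0) :
    (p*lam + (1-p)) * lam ^ (-t : ℝ) < 1 := by
  have hu : 0 < p*lam + (1-p) := by nlinarith
  have h1 : Real.log (p*lam+(1-p)) ≤ p*(lam-1) := by
    have := Real.log_le_sub_one_of_pos hu
    linarith
  have h2 : p*(lam-1) < t*(lam-1)/lam := by
    rw [lt_div_iff₀ hlam]
    nlinarith
  have hloglam : 1 - lam⁻¹ ≤ Real.log lam := by
    have h := Real.log_le_sub_one_of_pos (show (0:ℝ) < lam⁻¹ by positivity)
    rw [Real.log_inv] at h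
    linarith
  have h3 : t*(lam-1)/lam ≤ t * Real.log lam := by
    have : (lam-1)/lam = 1 - lam⁻¹ := by field_simp
    rw [mul_div_assoc, this]
    exact mul_le_mul_of_nonneg_left hloglam ht.le
  have hlog : Real.log ((p*lam+(1-p)) * lam ^ (-t : ℝ)) < 0 := by
    rw [Real.log_mul (ne_of_gt hu) (by positivity), Real.log_rpow hlam]
    linarith
  have hpos : 0 < (p*lam+(1-p)) * lam ^ (-t : ℝ) := by positivity
  exact (Real.log_neg_iff hpos).mp hlog

private lemma chernoff_upper_aux (p t : ℝ) (hp0 : 0 < p) (hpt : p < t) (ht1 : t < 1) :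
    ∃ ρ : ℝ, 0 ≤ ρ ∧ ρ < 1 ∧ ∀ N : ℕ,
      ∑ n ∈ (range (N+1)).filter (fun n : ℕ => t*(N:ℝ) ≤ (n:ℝ)),
        (N.choose n : ℝ) * p^n * (1-p)^(N-n) ≤ ρ^N := by
  set lam : ℝ := (1 + t/p)/2 with hlamdef
  have ht0 : 0 < t := hp0.trans hpt
  have htp : 1 < t/p := (one_lt_div hp0).mpr hpt
  have hlam1 : 1 < lam := by rw [hlamdef]; linarith
  have hlam0 : 0 < lam := by linarith
  have hlamt : p * lam < t := by
    have : lam < t/p := by rw [hlamdef]; linarith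
    calc p * lam < p * (t/p) := by exact mul_lt_mul_of_pos_left this hp0
      _ = t := by field_simp
  have hp1 : p < 1 := hpt.trans ht1
  have hu : (0:ℝ) ≤ p*lam + (1-p) := by nlinarith
  refine ⟨(p*lam + (1-p)) * lam ^ (-t : ℝ), mul_nonneg hu (Real.rpow_nonneg hlam0.le _),
    rho_lt_one_aux p t lam hp0 hp1 ht0 hlam0 (by nlinarith), fun N => ?_⟩
  refine tail_sum_le_aux p lam t hp0.le hp1.le hlam0 N _ (Finset.filter_subset _ _) ?_
  intro n hn
  have hn' := (Finset.mem_filter.mp hn).2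
  rw [← Real.rpow_add hlam0]
  exact Real.one_le_rpow hlam1.le (by linarith)

private lemma chernoff_lower_aux (p t : ℝ) (ht0 : 0 < t) (hpt : t < p) (hp1 : p < 1) :
    ∃ ρ : ℝ, 0 ≤ ρ ∧ ρ < 1 ∧ ∀ N : ℕ,
      ∑ n ∈ (range (N+1)).filter (fun n : ℕ => ¬ t*(N:ℝ) ≤ (n:ℝ)),
        (N.choose n : ℝ) * p^n * (1-p)^(N-n) ≤ ρ^N := by
  have hp0 : 0 < p := ht0.trans hpt
  set lam : ℝ := (1 + t/p)/2 with hlamdef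
  have htp : t/p < 1 := (div_lt_one hp0).mpr hpt
  have htp0 : 0 < t/p := by positivity
  have hlam1 : lam < 1 := by rw [hlamdef]; linarith
  have hlam0 : 0 < lam := by rw [hlamdef]; linarith
  have hlamt : t < p * lam := by
    have h : t/p < lam := by rw [hlamdef]; linarith
    calc t = p * (t/p) := by field_simp
      _ < p * lam := mul_lt_mul_of_pos_left h hp0
  have hu : (0:ℝ) ≤ p*lam + (1-p) := by nlinarith
  refine ⟨(p*lam + (1-p)) * lam ^ (-t : ℝ), mul_nonneg hu (Real.rpow_nonneg hlam0.le _),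
    rho_lt_one_aux p t lam hp0 hp1 ht0 hlam0 (by nlinarith), fun N => ?_⟩
  refine tail_sum_le_aux p lam t hp0.le hp1.le hlam0 N _ (Finset.filter_subset _ _) ?_
  intro n hn
  have hn' := (Finset.mem_filter.mp hn).2
  push_neg at hn'
  rw [← Real.rpow_add hlam0]
  exact Real.one_le_rpow_of_pos_of_le_one_of_nonpos hlam0 hlam1.le (by linarith)


set_option maxHeartbeats 1000000 in
/-- The classical Fisher information of a mixture of binomial
distributions `Σ_i α_i·Binomial(N, p_i)` (with derivative proxies `D_i`) grows at least
linearly in `N`, provided the maximal success probability on the support of `α` has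
positive weight and nonzero derivative. -/
theorem stmt18 (d : ℕ) (hd : 1 ≤ d)
    (p : Fin d → ℝ) (hp0 : ∀ i, 0 < p i) (hp1 : ∀ i, p i < 1)
    (hpdist : ∀ i j, i ≠ j → p i ≠ p j)
    (α : Fin d → ℝ) (hα : ∀ i, 0 ≤ α i) (hαsum : ∑ i, α i = 1)
    (D : Fin d → ℝ)
    (istar : Fin d) (hmax : ∀ j, 0 < α j → p j ≤ p istar)
    (hαstar : 0 < α istar) (hDstar : D istar ≠ 0)
    (I : ℕ → ℝ)
    (hI : ∀ N : ℕ, I N = ∑ n ∈ Finset.range (N + 1),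
      (N.choose n : ℝ) *
        (∑ i, α i * D i * p i ^ n * (1 - p i) ^ (N - n)
            * ((n : ℝ) - N * p i) / (p i * (1 - p i))) ^ 2
        / (∑ i, α i * p i ^ n * (1 - p i) ^ (N - n))) :
    ∃ c : ℝ, 0 < c ∧ ∃ N₀ : ℕ, ∀ N : ℕ, N₀ ≤ N → c * N ≤ I N := by
  classical
  have hps0 : 0 < p istar := hp0 istar
  have hps1 : p istar < 1 := hp1 istar
  have h1ps : 0 < 1 - p istar := by linarith
  have hα1 : ∀ i, α i ≤ 1 := by
    intro i
    rw [← hαsum]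
    exact Finset.single_le_sum (fun j _ => hα j) (Finset.mem_univ i)
  -- threshold t between the second-largest support probability and p istar
  set s : ℝ := ((Finset.univ.erase istar).filter (fun i => 0 < α i)).fold max (p istar/2) p
    with hsdef
  have hslt : s < p istar := by
    rw [hsdef, Finset.fold_max_lt]
    refine ⟨by linarith, fun i hi => ?_⟩
    have h1 := Finset.mem_filter.mp hi
    have h2 := Finset.mem_erase.mp h1.1
    exact lt_of_le_of_ne (hmax i h1.2) (hpdist i istar h2.1)
  have hs0 : 0 < s := by
    have h : p istar/2 ≤ s := by
      rw [hsdef]; exact (Finset.le_fold_max _).mpr (Or.inl le_rfl)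
    linarith
  have hple : ∀ i, i ≠ istar → 0 < α i → p i ≤ s := by
    intro i hi hαi
    rw [hsdef]
    exact (Finset.le_fold_max _).mpr (Or.inr ⟨i, Finset.mem_filter.mpr
      ⟨Finset.mem_erase.mpr ⟨hi, Finset.mem_univ i⟩, hαi⟩, le_rfl⟩)
  set t : ℝ := (s + p istar)/2 with htdef
  have hts : s < t := by rw [htdef]; linarith
  have htps : t < p istar := by rw [htdef]; linarith
  have ht0 : 0 < t := by linarith
  have ht1 : t < 1 := by linarith
  -- choose geometric decay rates for each component
  have hexrho : ∀ i : Fin d, ∃ ρ : ℝ, 0 ≤ ρ ∧ ρ < 1 ∧ ∀ N : ℕ,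
      (i ≠ istar → 0 < α i →
        ∑ n ∈ (range (N+1)).filter (fun n : ℕ => t*(N:ℝ) ≤ (n:ℝ)),
          (N.choose n : ℝ) * p i^n * (1-p i)^(N-n) ≤ ρ^N)
      ∧ (i = istar →
        ∑ n ∈ (range (N+1)).filter (fun n : ℕ => ¬ t*(N:ℝ) ≤ (n:ℝ)),
          (N.choose n : ℝ) * p i^n * (1-p i)^(N-n) ≤ ρ^N) := by
    intro i
    by_cases hi : i = istar
    · subst hi
      obtain ⟨ρ, h0, h1, h2⟩ := chernoff_lower_aux (p i) t ht0 htps (hp1 i)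
      exact ⟨ρ, h0, h1, fun N => ⟨fun h _ => absurd rfl h, fun _ => h2 N⟩⟩
    · by_cases hαi : 0 < α i
      · obtain ⟨ρ, h0, h1, h2⟩ := chernoff_upper_aux (p i) t (hp0 i)
          (lt_of_le_of_lt (hple i hi hαi) hts) ht1
        exact ⟨ρ, h0, h1, fun N => ⟨fun _ _ => h2 N, fun h => absurd h hi⟩⟩
      · exact ⟨0, le_rfl, zero_lt_one, fun N =>
          ⟨fun _ h => absurd h hαi, fun h => absurd h hi⟩⟩
  choose ρ hρ0 hρ1 hρtail using hexrho
  -- basic positivity facts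
  have hbnn : ∀ (i : Fin d) (N n : ℕ), 0 ≤ (N.choose n : ℝ) * p i^n * (1-p i)^(N-n) := by
    intro i N n
    have h1 : (0:ℝ) ≤ 1 - p i := by linarith [hp1 i]
    have h2 := (hp0 i).le
    positivity
  have hBpos : ∀ N n : ℕ, 0 < ∑ i, α i * p i ^ n * (1 - p i) ^ (N - n) := by
    intro N n
    have h1 : 0 < α istar * p istar ^ n * (1-p istar)^(N-n) :=
      mul_pos (mul_pos hαstar (pow_pos hps0 n)) (pow_pos h1ps _)
    refine lt_of_lt_of_le h1 (Finset.single_le_sum (f := fun i => α i * p i^n * (1-p i)^(N-n))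
      (fun i _ => ?_) (Finset.mem_univ istar))
    have h3 : (0:ℝ) ≤ 1 - p i := by linarith [hp1 i]
    exact mul_nonneg (mul_nonneg (hα i) (pow_nonneg (hp0 i).le n)) (pow_nonneg h3 _)
  -- the tail index sets, and the sums G, H
  set Tl : ℕ → Finset ℕ :=
    fun N => (Finset.range (N+1)).filter (fun n : ℕ => t*(N:ℝ) ≤ (n:ℝ)) with hTldef
  set G : Fin d → ℕ → ℝ := fun i N => ∑ n ∈ Tl N,
      ((N.choose n : ℝ) * p i^n * (1-p i)^(N-n)) *
        (((n:ℝ) - N*p istar) * ((n:ℝ) - N*p i)) with hGdef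
  set H : Fin d → ℕ → ℝ := fun i N => ∑ n ∈ Tl N,
      ((N.choose n : ℝ) * p i^n * (1-p i)^(N-n)) * ((n:ℝ) - N*p istar)^2 with hHdef
  set Num : ℕ → ℝ := fun N => ∑ i, (α i * D i / (p i * (1 - p i))) * G i N with hNumdef
  set Den : ℕ → ℝ := fun N => ∑ i, α i * H i N with hDendef
  have hHnn : ∀ (i : Fin d) (N : ℕ), 0 ≤ H i N := by
    intro i N
    simp only [hHdef]
    exact Finset.sum_nonneg fun n _ => mul_nonneg (hbnn i N n) (sq_nonneg _)
  have hDennn : ∀ N, 0 ≤ Den N := fun N =>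
    Finset.sum_nonneg fun i _ => mul_nonneg (hα i) (hHnn i N)
  -- |n - N c| ≤ N for n ≤ N, 0 ≤ c ≤ 1
  have habs : ∀ (c : ℝ), 0 ≤ c → c ≤ 1 → ∀ (N n : ℕ), n ∈ Finset.range (N+1) →
      |(n:ℝ) - N*c| ≤ N := by
    intro c h0 h1 N n hn
    have hn' : (n:ℝ) ≤ N := by
      exact_mod_cast Nat.lt_succ_iff.mp (Finset.mem_range.mp hn)
    have hnn : (0:ℝ) ≤ n := Nat.cast_nonneg n
    have hNn : (0:ℝ) ≤ N := Nat.cast_nonneg N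
    rw [abs_le]
    constructor <;> nlinarith
  -- Cauchy–Schwarz : Num N ^ 2 ≤ Den N * I N
  have hCS : ∀ N : ℕ, Num N ^ 2 ≤ Den N * I N := by
    intro N
    set B : ℕ → ℝ := fun n => ∑ i, α i * p i ^ n * (1 - p i) ^ (N - n) with hBdef
    set A : ℕ → ℝ := fun n => ∑ i, α i * D i * p i ^ n * (1 - p i) ^ (N - n)
        * ((n : ℝ) - N * p i) / (p i * (1 - p i)) with hAdef
    have hCB : ∀ n ∈ range (N+1), 0 < (N.choose n : ℝ) * B n := by
      intro n hn
      have hc : 0 < N.choose n := Nat.choose_pos (Nat.lt_succ_iff.mp (Finset.mem_range.mp hn))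
      exact mul_pos (by exact_mod_cast hc) (hBpos N n)
    set F : ℕ → ℝ := fun n => ((n:ℝ) - N*p istar) * Real.sqrt ((N.choose n : ℝ) * B n)
      with hFdef
    set g : ℕ → ℝ := fun n => (N.choose n : ℝ) * A n / Real.sqrt ((N.choose n : ℝ) * B n)
      with hgdef
    have key := Finset.sum_mul_sq_le_sq_mul_sq (Tl N) F g
    have hsub : Tl N ⊆ range (N+1) := by
      simp only [hTldef]; exact Finset.filter_subset _ _
    -- (a) ∑ F g = Num N
    have hfg : ∑ n ∈ Tl N, F n * g n = Num N := by
      have step1 : ∀ n ∈ Tl N, F n * g n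
          = ((n:ℝ) - N*p istar) * ((N.choose n : ℝ) * A n) := by
        intro n hn
        have hs : Real.sqrt ((N.choose n : ℝ) * B n) ≠ 0 :=
          (Real.sqrt_pos.mpr (hCB n (hsub hn))).ne'
        have heq : F n * g n = ((n:ℝ) - N*p istar) * ((N.choose n : ℝ) * A n)
            * (Real.sqrt ((N.choose n : ℝ) * B n) / Real.sqrt ((N.choose n : ℝ) * B n)) := by
          simp only [hFdef, hgdef]
          ring
        rw [heq, div_self hs, mul_one]
      rw [Finset.sum_congr rfl step1]
      have step2 : ∀ n ∈ Tl N, ((n:ℝ) - N*p istar) * ((N.choose n : ℝ) * A n)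
          = ∑ i, (α i * D i / (p i * (1 - p i))) *
              (((N.choose n : ℝ) * p i^n * (1-p i)^(N-n)) *
                (((n:ℝ) - N*p istar) * ((n:ℝ) - N*p i))) := by
        intro n hn
        simp only [hAdef]
        rw [Finset.mul_sum, Finset.mul_sum]
        exact Finset.sum_congr rfl fun i _ => by ring
      rw [Finset.sum_congr rfl step2, Finset.sum_comm]
      simp only [hNumdef, hGdef]
      exact Finset.sum_congr rfl fun i _ => (Finset.mul_sum _ _ _).symm
    -- (b) ∑ F^2 = Den N
    have hf2 : ∑ n ∈ Tl N, F n ^ 2 = Den N := by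
      have step1 : ∀ n ∈ Tl N, F n ^ 2
          = ((n:ℝ) - N*p istar)^2 * ((N.choose n : ℝ) * B n) := by
        intro n hn
        simp only [hFdef]
        rw [mul_pow, Real.sq_sqrt (hCB n (hsub hn)).le]
      rw [Finset.sum_congr rfl step1]
      have step2 : ∀ n ∈ Tl N, ((n:ℝ) - N*p istar)^2 * ((N.choose n : ℝ) * B n)
          = ∑ i, α i * (((N.choose n : ℝ) * p i^n * (1-p i)^(N-n)) *
              ((n:ℝ) - N*p istar)^2) := by
        intro n hn
        simp only [hBdef]
        rw [Finset.mul_sum, Finset.mul_sum]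
        exact Finset.sum_congr rfl fun i _ => by ring
      rw [Finset.sum_congr rfl step2, Finset.sum_comm]
      simp only [hDendef, hHdef]
      exact Finset.sum_congr rfl fun i _ => (Finset.mul_sum _ _ _).symm
    -- (c) ∑ g^2 ≤ I N
    have hg2 : ∑ n ∈ Tl N, g n ^ 2 ≤ I N := by
      have step1 : ∀ n ∈ Tl N, g n ^ 2
          = (N.choose n : ℝ) * A n ^ 2 / B n := by
        intro n hn
        have hB0 : B n ≠ 0 := (hBpos N n).ne'
        have hc0 : (N.choose n : ℝ) ≠ 0 := by
          have := hCB n (hsub hn)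
          intro h
          rw [h, zero_mul] at this
          exact lt_irrefl 0 this
        simp only [hgdef]
        rw [div_pow, Real.sq_sqrt (hCB n (hsub hn)).le,
          div_eq_div_iff (hCB n (hsub hn)).ne' (hBpos N n).ne']
        ring
      rw [Finset.sum_congr rfl step1, hI N]
      refine Finset.sum_le_sum_of_subset_of_nonneg hsub fun n hn _ => ?_
      exact div_nonneg (by positivity) (hBpos N n).le
    calc Num N ^ 2 = (∑ n ∈ Tl N, F n * g n) ^ 2 := by rw [hfg]
      _ ≤ (∑ n ∈ Tl N, F n ^ 2) * ∑ n ∈ Tl N, g n ^ 2 := key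
      _ = Den N * ∑ n ∈ Tl N, g n ^ 2 := by rw [hf2]
      _ ≤ Den N * I N := mul_le_mul_of_nonneg_left hg2 (hDennn N)
  -- bounds on G for i ≠ istar
  have hGsmall : ∀ i, i ≠ istar → 0 < α i → ∀ N : ℕ, |G i N| ≤ (N:ℝ)^2 * ρ i ^ N := by
    intro i hi hαi N
    simp only [hGdef]
    calc |∑ n ∈ Tl N, ((N.choose n : ℝ) * p i^n * (1-p i)^(N-n)) *
            (((n:ℝ) - N*p istar) * ((n:ℝ) - N*p i))|
        ≤ ∑ n ∈ Tl N, |((N.choose n : ℝ) * p i^n * (1-p i)^(N-n)) *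
            (((n:ℝ) - N*p istar) * ((n:ℝ) - N*p i))| := Finset.abs_sum_le_sum_abs _ _
      _ ≤ ∑ n ∈ Tl N, ((N.choose n : ℝ) * p i^n * (1-p i)^(N-n)) * (N:ℝ)^2 := by
          refine Finset.sum_le_sum fun n hn => ?_
          have hnr : n ∈ range (N+1) := by
            simp only [hTldef] at hn; exact (Finset.mem_filter.mp hn).1
          rw [abs_mul, abs_of_nonneg (hbnn i N n)]
          refine mul_le_mul_of_nonneg_left ?_ (hbnn i N n)
          rw [abs_mul]
          calc |(n:ℝ) - N*p istar| * |(n:ℝ) - N*p i|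
              ≤ (N:ℝ) * (N:ℝ) := mul_le_mul (habs _ hps0.le hps1.le N n hnr)
                (habs _ (hp0 i).le (hp1 i).le N n hnr) (abs_nonneg _) (Nat.cast_nonneg N)
            _ = (N:ℝ)^2 := by ring
      _ = (N:ℝ)^2 * ∑ n ∈ Tl N, (N.choose n : ℝ) * p i^n * (1-p i)^(N-n) := by
          rw [← Finset.sum_mul, mul_comm]
      _ ≤ (N:ℝ)^2 * ρ i ^ N := by
          refine mul_le_mul_of_nonneg_left ?_ (by positivity)
          exact (hρtail i N).1 hi hαi
  -- bounds on G istar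
  have hGstar : ∀ N : ℕ, (N:ℝ)*(p istar)*(1-p istar) - (N:ℝ)^2 * ρ istar ^ N ≤ G istar N
      ∧ G istar N ≤ (N:ℝ)*(p istar)*(1-p istar) := by
    intro N
    have hvar := sum_binom_var_aux (p istar) N
    have hGeq : G istar N = ∑ n ∈ Tl N,
        ((N.choose n : ℝ) * p istar^n * (1-p istar)^(N-n)) * ((n:ℝ) - N*p istar)^2 := by
      simp only [hGdef]
      exact Finset.sum_congr rfl fun n _ => by ring
    have hsplit := Finset.sum_filter_add_sum_filter_not (range (N+1))
      (fun n : ℕ => t*(N:ℝ) ≤ (n:ℝ))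
      (fun n => ((N.choose n : ℝ) * p istar^n * (1-p istar)^(N-n)) * ((n:ℝ) - N*p istar)^2)
    have hcompnn : 0 ≤ ∑ n ∈ (range (N+1)).filter (fun n : ℕ => ¬ t*(N:ℝ) ≤ (n:ℝ)),
        ((N.choose n : ℝ) * p istar^n * (1-p istar)^(N-n)) * ((n:ℝ) - N*p istar)^2 :=
      Finset.sum_nonneg fun n _ => mul_nonneg (hbnn istar N n) (sq_nonneg _)
    have hcompub : ∑ n ∈ (range (N+1)).filter (fun n : ℕ => ¬ t*(N:ℝ) ≤ (n:ℝ)),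
        ((N.choose n : ℝ) * p istar^n * (1-p istar)^(N-n)) * ((n:ℝ) - N*p istar)^2
        ≤ (N:ℝ)^2 * ρ istar ^ N := by
      calc ∑ n ∈ (range (N+1)).filter (fun n : ℕ => ¬ t*(N:ℝ) ≤ (n:ℝ)),
            ((N.choose n : ℝ) * p istar^n * (1-p istar)^(N-n)) * ((n:ℝ) - N*p istar)^2
          ≤ ∑ n ∈ (range (N+1)).filter (fun n : ℕ => ¬ t*(N:ℝ) ≤ (n:ℝ)),
            ((N.choose n : ℝ) * p istar^n * (1-p istar)^(N-n)) * (N:ℝ)^2 := by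
            refine Finset.sum_le_sum fun n hn => ?_
            have hnr : n ∈ range (N+1) := (Finset.mem_filter.mp hn).1
            refine mul_le_mul_of_nonneg_left ?_ (hbnn istar N n)
            have := habs _ hps0.le hps1.le N n hnr
            calc ((n:ℝ) - N*p istar)^2 = |(n:ℝ) - N*p istar|^2 := (sq_abs _).symm
              _ ≤ (N:ℝ)^2 := pow_le_pow_left₀ (abs_nonneg _) this 2
        _ = (N:ℝ)^2 * ∑ n ∈ (range (N+1)).filter (fun n : ℕ => ¬ t*(N:ℝ) ≤ (n:ℝ)),
            (N.choose n : ℝ) * p istar^n * (1-p istar)^(N-n) := by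
            rw [← Finset.sum_mul, mul_comm]
        _ ≤ (N:ℝ)^2 * ρ istar ^ N := by
            refine mul_le_mul_of_nonneg_left ?_ (by positivity)
            exact (hρtail istar N).2 rfl
    have hTlsum : G istar N
        + ∑ n ∈ (range (N+1)).filter (fun n : ℕ => ¬ t*(N:ℝ) ≤ (n:ℝ)),
            ((N.choose n : ℝ) * p istar^n * (1-p istar)^(N-n)) * ((n:ℝ) - N*p istar)^2
        = (N:ℝ)*(p istar)*(1-p istar) := by
      rw [hGeq]
      simp only [hTldef]
      rw [hsplit, hvar]
    constructor <;> linarith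
  -- bounds on H
  have hHstar : ∀ N : ℕ, H istar N ≤ (N:ℝ)*(p istar)*(1-p istar) := by
    intro N
    have hvar := sum_binom_var_aux (p istar) N
    simp only [hHdef]
    rw [← hvar]
    refine Finset.sum_le_sum_of_subset_of_nonneg ?_ fun n _ _ =>
      mul_nonneg (hbnn istar N n) (sq_nonneg _)
    simp only [hTldef]; exact Finset.filter_subset _ _
  have hHsmall : ∀ i, i ≠ istar → 0 < α i → ∀ N : ℕ, H i N ≤ (N:ℝ)^2 * ρ i ^ N := by
    intro i hi hαi N
    simp only [hHdef]
    calc ∑ n ∈ Tl N, ((N.choose n : ℝ) * p i^n * (1-p i)^(N-n)) * ((n:ℝ) - N*p istar)^2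
        ≤ ∑ n ∈ Tl N, ((N.choose n : ℝ) * p i^n * (1-p i)^(N-n)) * (N:ℝ)^2 := by
          refine Finset.sum_le_sum fun n hn => ?_
          have hnr : n ∈ range (N+1) := by
            simp only [hTldef] at hn; exact (Finset.mem_filter.mp hn).1
          refine mul_le_mul_of_nonneg_left ?_ (hbnn i N n)
          have := habs _ hps0.le hps1.le N n hnr
          calc ((n:ℝ) - N*p istar)^2 = |(n:ℝ) - N*p istar|^2 := (sq_abs _).symm
            _ ≤ (N:ℝ)^2 := pow_le_pow_left₀ (abs_nonneg _) this 2
      _ = (N:ℝ)^2 * ∑ n ∈ Tl N, (N.choose n : ℝ) * p i^n * (1-p i)^(N-n) := by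
          rw [← Finset.sum_mul, mul_comm]
      _ ≤ (N:ℝ)^2 * ρ i ^ N := by
          refine mul_le_mul_of_nonneg_left ?_ (by positivity)
          exact (hρtail i N).1 hi hαi
  -- error terms
  set Err : ℕ → ℝ := fun N => ∑ i, (α i * |D i| / (p i * (1-p i))) * ((N:ℝ)^2 * ρ i ^ N)
    with hErrdef
  set Err2 : ℕ → ℝ := fun N => ∑ i, α i * ((N:ℝ)^2 * ρ i ^ N) with hErr2def
  have hNumerr : ∀ N : ℕ, |Num N - α istar * D istar * N| ≤ Err N := by
    intro N
    have h1 : Num N - α istar * D istar * N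
        = ∑ i, ((α i * D i / (p i * (1 - p i))) * G i N
            - (if i = istar then α istar * D istar * (N:ℝ) else 0)) := by
      rw [Finset.sum_sub_distrib]
      simp only [hNumdef]
      congr 1
      rw [Finset.sum_ite_eq' Finset.univ istar (fun _ => α istar * D istar * (N:ℝ))]
      simp
    rw [h1]
    calc |∑ i, ((α i * D i / (p i * (1 - p i))) * G i N
            - if i = istar then α istar * D istar * (N:ℝ) else 0)|
        ≤ ∑ i, |(α i * D i / (p i * (1 - p i))) * G i N
            - if i = istar then α istar * D istar * (N:ℝ) else 0| :=
          Finset.abs_sum_le_sum_abs _ _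
      _ ≤ ∑ i, (α i * |D i| / (p i * (1-p i))) * ((N:ℝ)^2 * ρ i ^ N) := by
          refine Finset.sum_le_sum fun i _ => ?_
          have hpi0 := hp0 i
          have hpi1 : 0 < 1 - p i := by linarith [hp1 i]
          have hwabs : |α i * D i / (p i * (1 - p i))| = α i * |D i| / (p i * (1-p i)) := by
            rw [abs_div, abs_mul, abs_of_nonneg (hα i),
              abs_of_pos (mul_pos hpi0 hpi1)]
          by_cases hi : i = istar
          · subst hi
            rw [if_pos rfl]
            have hrw : α i * D i * (N:ℝ)
                = (α i * D i / (p i * (1 - p i))) * ((N:ℝ)*(p i)*(1-p i)) := by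
              rw [div_mul_eq_mul_div, eq_div_iff (ne_of_gt (mul_pos hpi0 hpi1))]
              ring
            have hwnn : 0 ≤ α i * |D i| / (p i * (1-p i)) :=
              div_nonneg (mul_nonneg (hα i) (abs_nonneg _)) (mul_pos hpi0 hpi1).le
            rw [hrw, ← mul_sub, abs_mul, hwabs]
            refine mul_le_mul_of_nonneg_left ?_ hwnn
            have hG := hGstar N
            rw [abs_le]
            have hrnn : 0 ≤ (N:ℝ)^2 * ρ i ^ N :=
              mul_nonneg (by positivity) (pow_nonneg (hρ0 i) N)
            constructor <;> [linarith [hG.1]; linarith [hG.2]]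
          · rw [if_neg hi, sub_zero, abs_mul, hwabs]
            rcases eq_or_lt_of_le (hα i) with hz | hαi
            · rw [← hz]
              simp
            · exact mul_le_mul_of_nonneg_left (hGsmall i hi hαi N)
                (div_nonneg (mul_nonneg (hα i) (abs_nonneg _)) (mul_pos hpi0 hpi1).le)
  have hDenub : ∀ N : ℕ, Den N ≤ (N:ℝ)*(p istar)*(1-p istar) + Err2 N := by
    intro N
    have h1 : ∀ i : Fin d, α i * H i N
        ≤ (if i = istar then (N:ℝ)*(p istar)*(1-p istar) else 0)
          + α i * ((N:ℝ)^2 * ρ i ^ N) := by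
      intro i
      by_cases hi : i = istar
      · subst hi
        rw [if_pos rfl]
        have h2 : α i * H i N ≤ 1 * ((N:ℝ)*(p i)*(1-p i)) := by
          refine mul_le_mul (hα1 i) (hHstar N) (hHnn i N) zero_le_one
        have h3 : 0 ≤ α i * ((N:ℝ)^2 * ρ i ^ N) :=
          mul_nonneg (hα i) (mul_nonneg (by positivity) (pow_nonneg (hρ0 i) N))
        linarith
      · rw [if_neg hi, zero_add]
        rcases eq_or_lt_of_le (hα i) with hz | hαi
        · rw [← hz]; simp
        · exact mul_le_mul_of_nonneg_left (hHsmall i hi hαi N) (hα i)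
    calc Den N ≤ ∑ i, ((if i = istar then (N:ℝ)*(p istar)*(1-p istar) else 0)
          + α i * ((N:ℝ)^2 * ρ i ^ N)) := Finset.sum_le_sum fun i _ => h1 i
      _ = (N:ℝ)*(p istar)*(1-p istar) + Err2 N := by
          rw [Finset.sum_add_distrib,
            Finset.sum_ite_eq' Finset.univ istar (fun _ => (N:ℝ)*(p istar)*(1-p istar))]
          simp [hErr2def]
  -- limits of the error terms
  have hbase : ∀ i : Fin d, Tendsto (fun N : ℕ => (N:ℝ)^2 * ρ i ^ N) atTop (𝓝 0) := by
    intro i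
    have hnorm : ‖ρ i‖ < 1 := by
      rw [Real.norm_eq_abs, abs_of_nonneg (hρ0 i)]
      exact hρ1 i
    exact (summable_pow_mul_geometric_of_norm_lt_one 2 hnorm).tendsto_atTop_zero
  have hErrT : Tendsto Err atTop (𝓝 0) := by
    have h := tendsto_finset_sum (Finset.univ : Finset (Fin d))
      (fun i _ => ((hbase i).const_mul (α i * |D i| / (p i * (1-p i)))))
    simpa [hErrdef] using h
  have hErr2T : Tendsto Err2 atTop (𝓝 0) := by
    have h := tendsto_finset_sum (Finset.univ : Finset (Fin d))
      (fun i _ => ((hbase i).const_mul (α i)))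
    simpa [hErr2def] using h
  -- the constant
  set a : ℝ := α istar * |D istar| with hadef
  have ha0 : 0 < a := mul_pos hαstar (abs_pos.mpr hDstar)
  have hev : ∀ᶠ N : ℕ in atTop, Err N < a/2 ∧ Err2 N < p istar * (1-p istar) ∧ 1 ≤ N := by
    refine (hErrT.eventually_lt_const (by linarith)).and
      ((hErr2T.eventually_lt_const (by nlinarith)).and (eventually_ge_atTop 1))
  obtain ⟨N₀, hN₀⟩ := Filter.eventually_atTop.mp hev
  refine ⟨a^2/(8*(p istar)*(1-p istar)),
    div_pos (pow_pos ha0 2) (mul_pos (mul_pos (by norm_num) hps0) h1ps), N₀, ?_⟩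
  intro N hN
  obtain ⟨hE1, hE2, hN1⟩ := hN₀ N hN
  have hNR : (1:ℝ) ≤ N := by exact_mod_cast hN1
  have hN0R : (0:ℝ) < N := by linarith
  -- |Num N| ≥ (a/2) N
  have habsEq : |α istar * D istar * N| = a * N := by
    rw [abs_mul, abs_mul, abs_of_nonneg (hα istar), abs_of_nonneg (Nat.cast_nonneg N : (0:ℝ) ≤ N), hadef]
  have h4 : a * N - Err N ≤ |Num N| := by
    have h5 := hNumerr N
    have h6 : |α istar * D istar * (N:ℝ)| - |Num N| ≤ |α istar * D istar * (N:ℝ) - Num N| :=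
      abs_sub_abs_le_abs_sub _ _
    rw [abs_sub_comm] at h6
    linarith [habsEq ▸ h6]
  have h5 : (a/2) * N ≤ |Num N| := by
    have h7 : Err N ≤ (a/2) * N := by nlinarith
    linarith
  have h6 : Den N ≤ 2*(N:ℝ)*(p istar)*(1-p istar) := by
    have h8 := hDenub N
    have h9 : p istar * (1-p istar) ≤ (N:ℝ) * (p istar * (1-p istar)) := by
      nlinarith [mul_pos hps0 h1ps]
    nlinarith
  have hInn : 0 ≤ I N := by
    rw [hI N]
    refine Finset.sum_nonneg fun n hn => ?_
    exact div_nonneg (by positivity) (hBpos N n).le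
  have h7 : ((a/2)*N)^2 ≤ Den N * I N := by
    have h8 := hCS N
    have h9 : ((a/2)*N)^2 ≤ Num N ^ 2 := by
      rw [← sq_abs (Num N)]
      exact pow_le_pow_left₀ (mul_nonneg (by linarith) (Nat.cast_nonneg N)) h5 2
    linarith
  have h8 : ((a/2)*N)^2 ≤ (2*(N:ℝ)*(p istar)*(1-p istar)) * I N :=
    le_trans h7 (mul_le_mul_of_nonneg_right h6 hInn)
  have h9 : a^2*N ≤ 8*(p istar)*(1-p istar)*I N := by
    have h10 : a^2*N*N ≤ (8*(p istar)*(1-p istar)*I N)*N := by nlinarith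
    exact le_of_mul_le_mul_right h10 hN0R
  have hden8 : 0 < 8*(p istar)*(1-p istar) := mul_pos (mul_pos (by norm_num) hps0) h1ps
  calc a^2/(8*(p istar)*(1-p istar)) * N = a^2*N / (8*(p istar)*(1-p istar)) := by ring
    _ ≤ I N := by
        rw [div_le_iff₀ hden8]
        linarith
end
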